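/- arXiv:2208.01505 — 2 statements merged into one kernel-verified Lean document; each statement's English description precedes it below -/
import Mathlib

section
/- Let f satisfy (H1)-(H3). The propagating terrace connecting 1 and 0 is unique: if {φⱼ} with speeds {cⱼ} and platforms {pⱼ}, and {φ̂ⱼ} with speeds {ĉⱼ} and platforms {p̂ⱼ}, are two propagating terraces connecting 1 and 0, then they have the same number of fronts J = Ĵ, the same platforms pⱼ = p̂ⱼ, the same speeds cⱼ = ĉⱼ, and φⱼ ≡ φ̂ⱼ(· + Zⱼ) for some shifts Zⱼ ∈ ℝ. -/
set_option maxHeartbeats 1000000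


open Set Filter Topology

/-- The set of stable steady states `θ (2*i)`, `0 ≤ i ≤ I`. -/
def StablePts (I : ℕ) (θ : ℕ → ℝ) : Set ℝ := {x | ∃ i ≤ I, x = θ (2 * i)}

/-- Hypothesis (H1): finitely many ordered steady states with alternating signs of `f`. -/
def H1 (f : ℝ → ℝ) (I : ℕ) (θ : ℕ → ℝ) : Prop :=
  0 < I ∧ θ 0 = 1 ∧ θ (2 * I) = 0 ∧
  (∀ i j : ℕ, i < j → j ≤ 2 * I → θ j < θ i) ∧
  (∀ u : ℝ, u < 0 → 0 < f u) ∧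
  (∀ i < I, ∀ u : ℝ, θ (2 * i + 1) < u → u < θ (2 * i) → 0 < f u) ∧
  (∀ u : ℝ, 1 < u → f u < 0) ∧
  (∀ i : ℕ, 1 ≤ i → i ≤ I → ∀ u : ℝ, θ (2 * i) < u → u < θ (2 * i - 1) → f u < 0)

/-- Hypothesis (H2): `f` is `C¹` and Lipschitz away from the stable steady states. -/
def H2 (f : ℝ → ℝ) (I : ℕ) (θ : ℕ → ℝ) : Prop :=
  ∀ x ∉ StablePts I θ, ∃ ε > 0, ContDiffOn ℝ 1 f (Metric.ball x ε) ∧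
    ∃ K : NNReal, LipschitzOnWith K f (Metric.ball x ε)

/-- Hypothesis (H3): jump discontinuities at the stable states, positive left limit and
negative right limit. -/
def H3 (f : ℝ → ℝ) (I : ℕ) (θ : ℕ → ℝ) : Prop :=
  ∀ i ≤ I, ∃ Lm Lp : ℝ, 0 < Lm ∧ Lp < 0 ∧
    Tendsto f (𝓝[<] θ (2 * i)) (𝓝 Lm) ∧ Tendsto f (𝓝[>] θ (2 * i)) (𝓝 Lp)

/-- The phase-plane trajectory from Proposition 3.2: `q` is continuous on `[pl, pu]`,
vanishes at `pu`, is negative in between, solves `dq/dp = -c - f p / q p` away from the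
discontinuity points of `f`, and terminates on one of the two axes. -/
def Traj (f : ℝ → ℝ) (I : ℕ) (θ : ℕ → ℝ) (c pu pl : ℝ) (q : ℝ → ℝ) : Prop :=
  pl ∈ Ico (0 : ℝ) pu ∧ ContinuousOn q (Icc pl pu) ∧ q pu = 0 ∧
  (∀ p ∈ Ioo pl pu, q p < 0) ∧
  (∀ p ∈ Ioo pl pu, p ∉ StablePts I θ → HasDerivAt q (-c - f p / q p) p) ∧
  (0 < pl → q pl = 0) ∧ (pl = 0 → q 0 ≤ 0)

/-- A traveling wave solution: a `C¹` profile satisfying `φ'' + c φ' + f (φ) = 0`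
classically wherever `φ` avoids the stable steady states. -/
def IsTW (f : ℝ → ℝ) (I : ℕ) (θ : ℕ → ℝ) (c : ℝ) (φ : ℝ → ℝ) : Prop :=
  ContDiff ℝ 1 φ ∧
  ∀ z : ℝ, φ z ∉ StablePts I θ →
    HasDerivAt (deriv φ) (-(c * deriv φ z) - f (φ z)) z

/-- `φ` monotonically connects `b` (at `-∞`) and `a` (at `+∞`). -/
def ConnectsMono (φ : ℝ → ℝ) (b a : ℝ) : Prop :=
  Antitone φ ∧ Tendsto φ atBot (𝓝 b) ∧ Tendsto φ atTop (𝓝 a)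

/-- A traveling wave is connected if the support of `φ'` is an interval. -/
def ConnectedTW (φ : ℝ → ℝ) : Prop := OrdConnected {z : ℝ | deriv φ z ≠ 0}

/-- A traveling wave is compact if the closure of the support of `φ'` is compact. -/
def CompactTW (φ : ℝ → ℝ) : Prop := IsCompact (closure {z : ℝ | deriv φ z ≠ 0})

/-- A propagating terrace connecting 1 and 0. -/
def IsTerrace (f : ℝ → ℝ) (I : ℕ) (θ : ℕ → ℝ) (J : ℕ)
    (φ : ℕ → ℝ → ℝ) (c : ℕ → ℝ) (plat : ℕ → ℝ) : Prop :=
  0 < J ∧ plat 0 = 1 ∧ plat J = 0 ∧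
  (∀ j < J, plat (j + 1) < plat j) ∧
  (∀ j ≤ J, plat j ∈ StablePts I θ) ∧
  (∀ j : ℕ, j + 1 < J → c j ≤ c (j + 1)) ∧
  ∀ j < J, IsTW f I θ (c j) (φ j) ∧
    ConnectsMono (φ j) (plat j) (plat (j + 1)) ∧ ConnectedTW (φ j)

namespace S16

noncomputable section

/-! ### Elementary helpers -/

lemma neg_lt_neg_of_sq {a b : ℝ} (ha : a < 0) (hb : b < 0) (h : b ^ 2 < a ^ 2) : a < b := by
  nlinarith

lemma neg_eq_of_sq {a b : ℝ} (ha : a < 0) (hb : b < 0) (h : a ^ 2 = b ^ 2) : a = b := by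
  have h2 : (a - b) * (a + b) = 0 := by ring_nf; nlinarith
  rcases mul_eq_zero.1 h2 with h3 | h3
  · linarith
  · linarith

/-! ### Monotonicity with finitely many exceptional points -/

lemma anti_exc_aux : ∀ (n : ℕ) (E : Set ℝ), E.Finite → ∀ (g g' : ℝ → ℝ) (x y : ℝ),
    (E ∩ Ioo x y).ncard ≤ n →
    x ≤ y → ContinuousOn g (Icc x y) →
    (∀ p ∈ Ioo x y, p ∉ E → HasDerivAt g (g' p) p) →
    (∀ p ∈ Ioo x y, p ∉ E → g' p ≤ 0) →
    g y ≤ g x := by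
  intro n
  induction n with
  | zero =>
    intro E hE g g' x y hcard hxy hcont hd h0
    have hemp : E ∩ Ioo x y = ∅ := by
      have : (E ∩ Ioo x y).ncard = 0 := Nat.le_zero.1 hcard
      exact (Set.ncard_eq_zero (hE.inter_of_left _)).1 this
    have : AntitoneOn g (Icc x y) := by
      apply antitoneOn_of_deriv_nonpos (convex_Icc x y) hcont
      · intro p hp
        rw [interior_Icc] at hp
        have hpE : p ∉ E := fun hmem => (Set.eq_empty_iff_forall_notMem.1 hemp p) ⟨hmem, hp⟩
        exact ((hd p hp hpE).differentiableAt).differentiableWithinAt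
      · intro p hp
        rw [interior_Icc] at hp
        have hpE : p ∉ E := fun hmem => (Set.eq_empty_iff_forall_notMem.1 hemp p) ⟨hmem, hp⟩
        rw [(hd p hp hpE).deriv]
        exact h0 p hp hpE
    exact this (left_mem_Icc.2 hxy) (right_mem_Icc.2 hxy) hxy
  | succ n ih =>
    intro E hE g g' x y hcard hxy hcont hd h0
    rcases Set.eq_empty_or_nonempty (E ∩ Ioo x y) with hemp | ⟨e, heE, heI⟩
    · exact ih E hE g g' x y (by rw [hemp]; simp) hxy hcont hd h0
    · have hcard' : ∀ a b : ℝ, Ioo a b ⊆ Ioo x y \ {e} → (E ∩ Ioo a b).ncard ≤ n := by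
        intro a b hsub
        have hsub2 : E ∩ Ioo a b ⊆ (E ∩ Ioo x y) \ {e} := by
          intro p ⟨hp1, hp2⟩
          exact ⟨⟨hp1, (hsub hp2).1⟩, (hsub hp2).2⟩
        have hlt : (E ∩ Ioo a b).ncard < n + 1 :=
          calc (E ∩ Ioo a b).ncard ≤ ((E ∩ Ioo x y) \ {e}).ncard :=
              Set.ncard_le_ncard hsub2 ((hE.inter_of_left _).diff)
          _ < (E ∩ Ioo x y).ncard :=
              Set.ncard_diff_singleton_lt_of_mem ⟨heE, heI⟩ (hE.inter_of_left _)
          _ ≤ n + 1 := hcard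
        exact Nat.lt_succ_iff.mp hlt
      have h1 : g e ≤ g x := by
        apply ih E hE g g' x e
        · exact hcard' x e (fun p hp => ⟨⟨hp.1, hp.2.trans heI.2⟩, fun hpe => by
            simp at hpe; exact absurd hpe (ne_of_lt hp.2)⟩)
        · exact le_of_lt heI.1
        · exact hcont.mono (Icc_subset_Icc le_rfl (le_of_lt heI.2))
        · exact fun p hp hpE => hd p ⟨hp.1, hp.2.trans heI.2⟩ hpE
        · exact fun p hp hpE => h0 p ⟨hp.1, hp.2.trans heI.2⟩ hpE
      have h2 : g y ≤ g e := by
        apply ih E hE g g' e y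
        · exact hcard' e y (fun p hp => ⟨⟨heI.1.trans hp.1, hp.2⟩, fun hpe => by
            simp at hpe; exact absurd hpe (ne_of_gt hp.1)⟩)
        · exact le_of_lt heI.2
        · exact hcont.mono (Icc_subset_Icc (le_of_lt heI.1) le_rfl)
        · exact fun p hp hpE => hd p ⟨heI.1.trans hp.1, hp.2⟩ hpE
        · exact fun p hp hpE => h0 p ⟨heI.1.trans hp.1, hp.2⟩ hpE
      exact h2.trans h1

lemma anti_exc {E : Set ℝ} (hE : E.Finite) {g g' : ℝ → ℝ} {x y : ℝ}
    (hxy : x ≤ y) (hcont : ContinuousOn g (Icc x y))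
    (hd : ∀ p ∈ Ioo x y, p ∉ E → HasDerivAt g (g' p) p)
    (h0 : ∀ p ∈ Ioo x y, p ∉ E → g' p ≤ 0) :
    g y ≤ g x :=
  anti_exc_aux (E ∩ Ioo x y).ncard E hE g g' x y le_rfl hxy hcont hd h0

lemma mono_exc {E : Set ℝ} (hE : E.Finite) {g g' : ℝ → ℝ} {x y : ℝ}
    (hxy : x ≤ y) (hcont : ContinuousOn g (Icc x y))
    (hd : ∀ p ∈ Ioo x y, p ∉ E → HasDerivAt g (g' p) p)
    (h0 : ∀ p ∈ Ioo x y, p ∉ E → 0 ≤ g' p) :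
    g x ≤ g y := by
  have := anti_exc hE (g := fun p => -g p) (g' := fun p => -g' p) hxy
    (hcont.neg) (fun p hp hpE => (hd p hp hpE).neg)
    (fun p hp hpE => neg_nonpos.2 (h0 p hp hpE))
  simpa using this

lemma strict_anti_exc {E : Set ℝ} (hE : E.Finite) {g g' : ℝ → ℝ} {x y : ℝ}
    (hxy : x < y) (hcont : ContinuousOn g (Icc x y))
    (hd : ∀ p ∈ Ioo x y, p ∉ E → HasDerivAt g (g' p) p)
    (h0 : ∀ p ∈ Ioo x y, p ∉ E → g' p < 0) :
    g y < g x := by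
  rcases Set.eq_empty_or_nonempty (E ∩ Ioo x y) with hemp | hne
  · have : StrictAntiOn g (Icc x y) := by
      apply strictAntiOn_of_deriv_neg (convex_Icc x y) hcont
      intro p hp
      rw [interior_Icc] at hp
      have hpE : p ∉ E := fun hmem => (Set.eq_empty_iff_forall_notMem.1 hemp p) ⟨hmem, hp⟩
      rw [(hd p hp hpE).deriv]
      exact h0 p hp hpE
    exact this (left_mem_Icc.2 hxy.le) (right_mem_Icc.2 hxy.le) hxy
  · set e := sInf (E ∩ Ioo x y) with he
    have hfin : (E ∩ Ioo x y).Finite := hE.inter_of_left _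
    have heme : e ∈ E ∩ Ioo x y := hfin.isClosed.csInf_mem hne (hfin.bddBelow)
    have hxe : x < e := heme.2.1
    have hfree : Ioo x e ∩ E = ∅ := by
      rw [Set.eq_empty_iff_forall_notMem]
      rintro p ⟨hp1, hp2⟩
      have : e ≤ p := csInf_le hfin.bddBelow ⟨hp2, hp1.1, hp1.2.trans heme.2.2⟩
      exact absurd this (not_le.2 hp1.2)
    have h1 : g e < g x := by
      have : StrictAntiOn g (Icc x e) := by
        apply strictAntiOn_of_deriv_neg (convex_Icc x e)
          (hcont.mono (Icc_subset_Icc le_rfl heme.2.2.le))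
        intro p hp
        rw [interior_Icc] at hp
        have hpI : p ∈ Ioo x y := ⟨hp.1, hp.2.trans heme.2.2⟩
        have hpE : p ∉ E := fun hmem =>
          (Set.eq_empty_iff_forall_notMem.1 hfree p) ⟨hp, hmem⟩
        rw [(hd p hpI hpE).deriv]
        exact h0 p hpI hpE
      exact this (left_mem_Icc.2 hxe.le) (right_mem_Icc.2 hxe.le) hxe
    have h2 : g y ≤ g e := by
      apply anti_exc hE (g' := g') heme.2.2.le
        (hcont.mono (Icc_subset_Icc hxe.le le_rfl))
      · exact fun p hp hpE => hd p ⟨hxe.trans hp.1, hp.2⟩ hpE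
      · exact fun p hp hpE => le_of_lt (h0 p ⟨hxe.trans hp.1, hp.2⟩ hpE)
    exact lt_of_le_of_lt h2 h1


/-! ### Trajectory data -/

structure TD (f : ℝ → ℝ) (S : Set ℝ) (c α β : ℝ) (q : ℝ → ℝ) : Prop where
  hlt : β < α
  cont : ContinuousOn q (Icc β α)
  top : q α = 0
  bot : q β = 0
  neg : ∀ p ∈ Ioo β α, q p < 0
  ode : ∀ p ∈ Ioo β α, p ∉ S → HasDerivAt q (-c - f p / q p) p

def JumpTop (f : ℝ → ℝ) (S : Set ℝ) (α : ℝ) : Prop :=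
  ∃ δ m M, 0 < δ ∧ 0 < m ∧ m ≤ M ∧ (∀ u ∈ Ioo (α - δ) α, m ≤ f u ∧ f u ≤ M) ∧
    Ioo (α - δ) α ∩ S = ∅

def JumpBot (f : ℝ → ℝ) (S : Set ℝ) (β : ℝ) : Prop :=
  ∃ δ m M, 0 < δ ∧ 0 < m ∧ m ≤ M ∧ (∀ u ∈ Ioo β (β + δ), -M ≤ f u ∧ f u ≤ -m) ∧
    Ioo β (β + δ) ∩ S = ∅

lemma TD.reflect {f : ℝ → ℝ} {S : Set ℝ} {c α β : ℝ} {q : ℝ → ℝ} (h : TD f S c α β q) :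
    TD (fun p => -f (-p)) (Neg.neg ⁻¹' S) (-c) (-β) (-α) (fun p => q (-p)) := by
  constructor
  · linarith [h.hlt]
  · have : ContinuousOn (fun p : ℝ => -p) (Icc (-α) (-β)) := (continuous_neg).continuousOn
    refine ContinuousOn.comp h.cont this ?_
    intro p hp
    constructor <;> [linarith [hp.2]; linarith [hp.1]]
  · simpa using h.bot
  · simpa using h.top
  · intro p hp
    exact h.neg (-p) ⟨by linarith [hp.2], by linarith [hp.1]⟩
  · intro p hp hpS
    have hmem : -p ∈ Ioo β α := ⟨by linarith [hp.2], by linarith [hp.1]⟩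
    have hS : -p ∉ S := hpS
    have hd := (h.ode (-p) hmem hS).comp p (hasDerivAt_neg p)
    refine hd.congr_deriv ?_
    field_simp
    ring

lemma JumpBot.reflect {f : ℝ → ℝ} {S : Set ℝ} {β : ℝ} (h : JumpBot f S β) :
    JumpTop (fun p => -f (-p)) (Neg.neg ⁻¹' S) (-β) := by
  obtain ⟨δ, m, M, hδ, hm, hmM, hf, hfree⟩ := h
  refine ⟨δ, m, M, hδ, hm, hmM, ?_, ?_⟩
  · intro u hu
    have h1 : -u ∈ Ioo β (β + δ) := ⟨by linarith [hu.2], by linarith [hu.1]⟩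
    have h2 := hf (-u) h1
    refine ⟨?_, ?_⟩
    · show m ≤ -f (-u); linarith [h2.1, h2.2]
    · show -f (-u) ≤ M; linarith [h2.1, h2.2]
  · rw [Set.eq_empty_iff_forall_notMem]
    rintro p ⟨hp1, hp2⟩
    have : -p ∈ Ioo β (β + δ) ∩ S := ⟨⟨by linarith [hp1.2], by linarith [hp1.1]⟩, hp2⟩
    rw [Set.eq_empty_iff_forall_notMem] at hfree
    exact hfree (-p) this

lemma JumpTop.reflect {f : ℝ → ℝ} {S : Set ℝ} {α : ℝ} (h : JumpTop f S α) :
    JumpBot (fun p => -f (-p)) (Neg.neg ⁻¹' S) (-α) := by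
  obtain ⟨δ, m, M, hδ, hm, hmM, hf, hfree⟩ := h
  refine ⟨δ, m, M, hδ, hm, hmM, ?_, ?_⟩
  · intro u hu
    have h1 : -u ∈ Ioo (α - δ) α := ⟨by linarith [hu.2], by linarith [hu.1]⟩
    have h2 := hf (-u) h1
    refine ⟨?_, ?_⟩
    · show -M ≤ -f (-u); linarith [h2.1, h2.2]
    · show -f (-u) ≤ -m; linarith [h2.1, h2.2]
  · rw [Set.eq_empty_iff_forall_notMem]
    rintro p ⟨hp1, hp2⟩
    have : -p ∈ Ioo (α - δ) α ∩ S := ⟨⟨by linarith [hp1.2], by linarith [hp1.1]⟩, hp2⟩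
    rw [Set.eq_empty_iff_forall_notMem] at hfree
    exact hfree (-p) this

/-! ### Derivative of `(α - p) * sqrt (α - p) ^ n` -/

lemma hasDerivAt_sub_sqrt_pow (α p : ℝ) (hp : p < α) (n : ℕ) :
    HasDerivAt (fun x => (α - x) * Real.sqrt (α - x) ^ n)
      (-((n + 2 : ℝ) / 2) * Real.sqrt (α - p) ^ n) p := by
  have h0 : (0:ℝ) < α - p := by linarith
  have hlin : HasDerivAt (fun x : ℝ => α - x) (-1 : ℝ) p := by
    simpa using (hasDerivAt_id p).const_sub α
  have hs : HasDerivAt (fun x => Real.sqrt (α - x)) (1 / (2 * Real.sqrt (α - p)) * (-1)) p :=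
    (Real.hasDerivAt_sqrt h0.ne').comp p hlin
  have hpow := hs.pow n
  have hmul := hlin.mul hpow
  refine hmul.congr_deriv ?_
  simp only [Pi.pow_apply]
  have hst : 0 < Real.sqrt (α - p) := Real.sqrt_pos.2 h0
  have hsq : Real.sqrt (α - p) ^ 2 = α - p := Real.sq_sqrt h0.le
  set t := Real.sqrt (α - p) with ht
  have hsq' : α - p = t ^ 2 := hsq.symm
  rw [hsq']
  have htne : t ≠ 0 := ne_of_gt hst
  cases n with
  | zero => simp
  | succ k =>
    have hk : k + 1 - 1 = k := rfl
    rw [hk]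
    field_simp
    ring

/-! ### Square bounds near the top endpoint -/

lemma TD.sq_bounds {f : ℝ → ℝ} {S : Set ℝ} {c α β m M δ : ℝ} {q : ℝ → ℝ}
    (h : TD f S c α β q)
    (hδ : 0 < δ) (hβδ : β ≤ α - δ) (hm : 0 < m) (hmM : m ≤ M)
    (hf : ∀ u ∈ Ioo (α - δ) α, m ≤ f u ∧ f u ≤ M)
    (hfree : Ioo (α - δ) α ∩ S = ∅) :
    ∃ δ₁, 0 < δ₁ ∧ δ₁ ≤ δ / 2 ∧
      (∀ p ∈ Ico (α - δ₁) α, p ∈ Ioo β α ∧ p ∉ S ∧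
        HasDerivAt (fun x => q x ^ 2) (-(2 * c * q p) - 2 * f p) p) ∧
      (∀ p ∈ Icc (α - δ₁) α,
        Real.sqrt (3 / 2 * m) * Real.sqrt (α - p) ≤ -q p ∧
        -q p ≤ Real.sqrt (3 * M) * Real.sqrt (α - p)) := by
  have hβα := h.hlt
  set ε := m / (4 * (1 + |c|)) with hεdef
  have hεpos : 0 < ε := by positivity
  have hqcont : Tendsto q (𝓝[Icc β α] α) (𝓝 0) := by
    have := h.cont α (right_mem_Icc.2 hβα.le)
    rwa [ContinuousWithinAt, h.top] at this
  have hball := hqcont (Ioo_mem_nhds (by linarith : -ε < (0:ℝ)) hεpos)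
  rw [mem_map, mem_nhdsWithin] at hball
  obtain ⟨t, ht_open, htα, ht⟩ := hball
  obtain ⟨δε, hδεpos, hδεball⟩ := Metric.isOpen_iff.1 ht_open α htα
  refine ⟨min (δ / 2) (δε / 2), by positivity, min_le_left _ _, ?_⟩
  set δ₁ := min (δ / 2) (δε / 2) with hδ₁def
  have hδ₁pos : 0 < δ₁ := by positivity
  have hsmall : ∀ p ∈ Ico (α - δ₁) α, |q p| < ε := by
    intro p hp
    have h1 : p ∈ Metric.ball α δε := by
      rw [Metric.mem_ball, Real.dist_eq, abs_sub_lt_iff]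
      constructor
      · linarith [hp.2]
      · have : δ₁ ≤ δε / 2 := min_le_right _ _
        have := hp.1
        linarith
    have h2 : p ∈ Icc β α := by
      constructor
      · have : δ₁ ≤ δ / 2 := min_le_left _ _
        have := hp.1
        linarith
      · exact hp.2.le
    have h3 := ht ⟨hδεball h1, h2⟩
    simp only [mem_preimage, mem_Ioo] at h3
    rw [abs_lt]
    exact ⟨h3.1, h3.2⟩
  have hmem : ∀ p ∈ Ico (α - δ₁) α, p ∈ Ioo β α ∧ p ∈ Ioo (α - δ) α ∧ p ∉ S := by
    intro p hp
    have hδ₁δ : δ₁ ≤ δ / 2 := min_le_left _ _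
    have h1 : α - δ < p := by linarith [hp.1]
    have h2 : β < p := by linarith
    have h3 : p ∉ S := by
      intro hpS
      rw [Set.eq_empty_iff_forall_notMem] at hfree
      exact hfree p ⟨⟨h1, hp.2⟩, hpS⟩
    exact ⟨⟨h2, hp.2⟩, ⟨h1, hp.2⟩, h3⟩
  have hder : ∀ p ∈ Ico (α - δ₁) α,
      HasDerivAt (fun x => q x ^ 2) (-(2 * c * q p) - 2 * f p) p := by
    intro p hp
    obtain ⟨h1, h2, h3⟩ := hmem p hp
    have hq := h.ode p h1 h3
    have hqneg := h.neg p h1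
    have := hq.pow 2
    refine this.congr_deriv ?_
    have : q p ≠ 0 := ne_of_lt hqneg
    field_simp
    ring
  have hvalb : ∀ p ∈ Ico (α - δ₁) α,
      -(2 * c * q p) - 2 * f p ≤ -(3 / 2 * m) ∧ -(3 * M) ≤ -(2 * c * q p) - 2 * f p := by
    intro p hp
    obtain ⟨h1, h2, h3⟩ := hmem p hp
    have hfb := hf p h2
    have hqs := hsmall p hp
    have habs : |2 * c * q p| ≤ m / 2 := by
      rw [abs_mul, abs_mul]
      have h2c : |(2:ℝ)| * |c| * |q p| ≤ 2 * |c| * ε := by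
        rw [abs_two]
        have : |q p| ≤ ε := hqs.le
        have : 0 ≤ 2 * |c| := by positivity
        nlinarith [abs_nonneg c, hqs.le, abs_nonneg (q p)]
      have h2cε : 2 * |c| * ε ≤ m / 2 := by
        rw [hεdef]
        have heq : 2 * |c| * (m / (4 * (1 + |c|))) = 2 * |c| * m / (4 * (1 + |c|)) := by ring
        rw [heq, div_le_div_iff₀ (by positivity) (by norm_num : (0:ℝ) < 2)]
        nlinarith [abs_nonneg c, hm.le]
      norm_num at h2c ⊢; linarith
    have hb := abs_le.1 habs
    constructor
    · linarith [hfb.1, hb.1, hb.2]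
    · linarith [hfb.2, hb.1, hb.2, hmM]
  have hcont2 : ContinuousOn (fun x => q x ^ 2) (Icc (α - δ₁) α) := by
    have hsub : Icc (α - δ₁) α ⊆ Icc β α := Icc_subset_Icc (by
      have : δ₁ ≤ δ / 2 := min_le_left _ _
      linarith) le_rfl
    exact (h.cont.mono hsub).pow 2
  have hqα : q α ^ 2 = 0 := by rw [h.top]; ring
  -- upper bound : q p ^ 2 ≤ 3 M (α - p)
  have hup : ∀ p ∈ Icc (α - δ₁) α, q p ^ 2 ≤ 3 * M * (α - p) := by
    intro p hp
    set B := fun x => q x ^ 2 - 3 * M * (α - x) with hB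
    have hmono : MonotoneOn B (Icc (α - δ₁) α) := by
      apply monotoneOn_of_deriv_nonneg (convex_Icc _ _)
      · exact hcont2.sub ((continuous_const.mul (continuous_const.sub continuous_id)).continuousOn)
      · intro x hx
        rw [interior_Icc] at hx
        have hd : HasDerivAt B ((-(2 * c * q x) - 2 * f x) - 3 * M * (-1)) x := by
          apply HasDerivAt.sub (hder x ⟨hx.1.le, hx.2⟩)
          exact ((hasDerivAt_id x).const_sub α).const_mul (3 * M)
        exact hd.differentiableAt.differentiableWithinAt
      · intro x hx
        rw [interior_Icc] at hx
        have hd : HasDerivAt B ((-(2 * c * q x) - 2 * f x) - 3 * M * (-1)) x := by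
          apply HasDerivAt.sub (hder x ⟨hx.1.le, hx.2⟩)
          exact ((hasDerivAt_id x).const_sub α).const_mul (3 * M)
        rw [hd.deriv]
        have := (hvalb x ⟨hx.1.le, hx.2⟩).2
        linarith
    have := hmono hp (right_mem_Icc.2 (by linarith [hδ₁pos])) hp.2
    simp only [hB, hqα] at this ⊢
    linarith [this]
  have hlow : ∀ p ∈ Icc (α - δ₁) α, 3 / 2 * m * (α - p) ≤ q p ^ 2 := by
    intro p hp
    set A := fun x => q x ^ 2 - 3 / 2 * m * (α - x) with hA
    have hmono : AntitoneOn A (Icc (α - δ₁) α) := by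
      apply antitoneOn_of_deriv_nonpos (convex_Icc _ _)
      · exact hcont2.sub ((continuous_const.mul (continuous_const.sub continuous_id)).continuousOn)
      · intro x hx
        rw [interior_Icc] at hx
        have hd : HasDerivAt A ((-(2 * c * q x) - 2 * f x) - 3 / 2 * m * (-1)) x := by
          apply HasDerivAt.sub (hder x ⟨hx.1.le, hx.2⟩)
          exact ((hasDerivAt_id x).const_sub α).const_mul (3 / 2 * m)
        exact hd.differentiableAt.differentiableWithinAt
      · intro x hx
        rw [interior_Icc] at hx
        have hd : HasDerivAt A ((-(2 * c * q x) - 2 * f x) - 3 / 2 * m * (-1)) x := by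
          apply HasDerivAt.sub (hder x ⟨hx.1.le, hx.2⟩)
          exact ((hasDerivAt_id x).const_sub α).const_mul (3 / 2 * m)
        rw [hd.deriv]
        have := (hvalb x ⟨hx.1.le, hx.2⟩).1
        linarith
    have := hmono hp (right_mem_Icc.2 (by linarith [hδ₁pos])) hp.2
    simp only [hA, hqα] at this ⊢
    linarith [this]
  refine ⟨fun p hp => ⟨(hmem p hp).1, (hmem p hp).2.2, hder p hp⟩, ?_⟩
  intro p hp
  have hqle : q p ≤ 0 := by
    rcases eq_or_lt_of_le hp.2 with heq | hlt
    · rw [heq, h.top]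
    · exact (h.neg p ⟨by
        have : δ₁ ≤ δ / 2 := min_le_left _ _
        linarith [hp.1], hlt⟩).le
  have hαp : 0 ≤ α - p := by linarith [hp.2]
  have habs : -q p = Real.sqrt (q p ^ 2) := by
    rw [Real.sqrt_sq_eq_abs, abs_of_nonpos hqle]
  have hMpos : 0 < M := lt_of_lt_of_le hm hmM
  constructor
  · rw [habs, ← Real.sqrt_mul (by positivity) (α - p)]
    exact Real.sqrt_le_sqrt (hlow p hp)
  · rw [habs, ← Real.sqrt_mul (by linarith : (0:ℝ) ≤ 3 * M) (α - p)]
    exact Real.sqrt_le_sqrt (hup p hp)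


/-! ### Monotone-trick helpers on a top strip -/

lemma mono_up_top {α δ₁ Cst : ℝ} {W W' : ℝ → ℝ} (hδ₁ : 0 < δ₁) (n : ℕ)
    (hW : ∀ p ∈ Ico (α - δ₁) α, HasDerivAt W (W' p) p)
    (hWc : ContinuousOn W (Icc (α - δ₁) α))
    (hWα : W α = 0)
    (hbd : ∀ p ∈ Ioo (α - δ₁) α, -(((n : ℝ) + 2) / 2 * Cst * Real.sqrt (α - p) ^ n) ≤ W' p) :
    ∀ p ∈ Icc (α - δ₁) α, W p ≤ Cst * ((α - p) * Real.sqrt (α - p) ^ n) := by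
  set g := fun p => W p - Cst * ((α - p) * Real.sqrt (α - p) ^ n) with hg
  have hgc : ContinuousOn g (Icc (α - δ₁) α) := by
    apply hWc.sub
    apply ContinuousOn.mul continuousOn_const
    exact ((continuous_const.sub continuous_id).continuousOn).mul
      (((Real.continuous_sqrt.comp (continuous_const.sub continuous_id)).pow n).continuousOn)
  have hder : ∀ p ∈ Ioo (α - δ₁) α,
      HasDerivAt g (W' p - Cst * (-(((n : ℝ) + 2) / 2) * Real.sqrt (α - p) ^ n)) p := by
    intro p hp
    exact (hW p ⟨hp.1.le, hp.2⟩).sub ((hasDerivAt_sub_sqrt_pow α p hp.2 n).const_mul Cst)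
  have hmono : MonotoneOn g (Icc (α - δ₁) α) := by
    apply monotoneOn_of_deriv_nonneg (convex_Icc _ _) hgc
    · intro p hp
      rw [interior_Icc] at hp
      exact (hder p hp).differentiableAt.differentiableWithinAt
    · intro p hp
      rw [interior_Icc] at hp
      rw [(hder p hp).deriv]
      have := hbd p hp
      nlinarith [this]
  intro p hp
  have := hmono hp (right_mem_Icc.2 (by linarith)) hp.2
  have hgα : g α = 0 := by
    simp only [hg, hWα, sub_self]
    ring
  rw [hgα] at this
  simpa [hg] using this

lemma mono_down_top {α δ₁ Cst : ℝ} {W W' : ℝ → ℝ} (hδ₁ : 0 < δ₁) (n : ℕ)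
    (hW : ∀ p ∈ Ico (α - δ₁) α, HasDerivAt W (W' p) p)
    (hWc : ContinuousOn W (Icc (α - δ₁) α))
    (hWα : W α = 0)
    (hbd : ∀ p ∈ Ioo (α - δ₁) α, W' p ≤ -(((n : ℝ) + 2) / 2 * Cst * Real.sqrt (α - p) ^ n)) :
    ∀ p ∈ Icc (α - δ₁) α, Cst * ((α - p) * Real.sqrt (α - p) ^ n) ≤ W p := by
  have key := mono_up_top (W := fun p => -W p) (W' := fun p => -W' p) (Cst := -Cst) hδ₁ n
    (fun p hp => (hW p hp).neg) hWc.neg (by simp [hWα])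
    (fun p hp => by
      have hb := hbd p hp
      show -(((n : ℝ) + 2) / 2 * -Cst * Real.sqrt (α - p) ^ n) ≤ -W' p
      nlinarith [hb])
  intro p hp
  have h2 : -W p ≤ -Cst * ((α - p) * Real.sqrt (α - p) ^ n) := key p hp
  nlinarith [h2]

/-! ### Strict comparison near the top endpoint -/

lemma strip_strict {f : ℝ → ℝ} {S : Set ℝ} {c1 c2 α β1 β2 m M δ : ℝ} {q1 q2 : ℝ → ℝ}
    (h1 : TD f S c1 α β1 q1) (h2 : TD f S c2 α β2 q2)
    (hδ : 0 < δ) (hβ1 : β1 ≤ α - δ) (hβ2 : β2 ≤ α - δ)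
    (hm : 0 < m) (hmM : m ≤ M)
    (hf : ∀ u ∈ Ioo (α - δ) α, m ≤ f u ∧ f u ≤ M)
    (hfree : Ioo (α - δ) α ∩ S = ∅)
    (hc : c1 < c2) :
    ∃ δ', 0 < δ' ∧ δ' ≤ δ ∧ ∀ p ∈ Ioo (α - δ') α, q2 p ^ 2 < q1 p ^ 2 ∧ q1 p < q2 p := by
  obtain ⟨δa, hδa, hδa2, hdera, hsqa⟩ := h1.sq_bounds hδ hβ1 hm hmM hf hfree
  obtain ⟨δb, hδb, hδb2, hderb, hsqb⟩ := h2.sq_bounds hδ hβ2 hm hmM hf hfree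
  set κ := Real.sqrt (3 / 2 * m) with hκdef
  set K := Real.sqrt (3 * M) with hKdef
  have hMpos : 0 < M := lt_of_lt_of_le hm hmM
  have hκ : 0 < κ := Real.sqrt_pos.2 (by linarith)
  have hK : 0 < K := Real.sqrt_pos.2 (by linarith)
  have hc' : 0 < c2 - c1 := sub_pos.2 hc
  set δ₁ := min δa δb with hδ₁def
  have hδ₁ : 0 < δ₁ := lt_min hδa hδb
  have hδ₁a : δ₁ ≤ δa := min_le_left _ _
  have hδ₁b : δ₁ ≤ δb := min_le_right _ _
  set W := fun p => q1 p ^ 2 - q2 p ^ 2 with hWdef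
  set W' := fun p => 2 * c2 * q2 p - 2 * c1 * q1 p with hW'def
  have hWat : ∀ p ∈ Ico (α - δ₁) α, HasDerivAt W (W' p) p := by
    intro p hp
    have ha := (hdera p ⟨by linarith [hp.1], hp.2⟩).2.2
    have hb := (hderb p ⟨by linarith [hp.1], hp.2⟩).2.2
    have hsum := ha.sub hb
    refine hsum.congr_deriv ?_
    simp only [hW'def]
    ring
  have hWc : ContinuousOn W (Icc (α - δ₁) α) := by
    have c1' : ContinuousOn q1 (Icc (α - δ₁) α) :=
      h1.cont.mono (fun p hp => ⟨by linarith [hp.1, hδa2], hp.2⟩)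
    have c2' : ContinuousOn q2 (Icc (α - δ₁) α) :=
      h2.cont.mono (fun p hp => ⟨by linarith [hp.1, hδb2], hp.2⟩)
    exact (c1'.pow 2).sub (c2'.pow 2)
  have hWα : W α = 0 := by simp only [hWdef, h1.top, h2.top]; ring
  have hspos : ∀ p, p < α → 0 < Real.sqrt (α - p) :=
    fun p hp => Real.sqrt_pos.2 (by linarith)
  have hbnd1 : ∀ p ∈ Icc (α - δ₁) α,
      κ * Real.sqrt (α - p) ≤ -q1 p ∧ -q1 p ≤ K * Real.sqrt (α - p) :=
    fun p hp => hsqa p ⟨by linarith [hp.1], hp.2⟩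
  have hbnd2 : ∀ p ∈ Icc (α - δ₁) α,
      κ * Real.sqrt (α - p) ≤ -q2 p ∧ -q2 p ≤ K * Real.sqrt (α - p) :=
    fun p hp => hsqb p ⟨by linarith [hp.1], hp.2⟩
  set C₀ := 2 * K * (|c1| + |c2|) + 1 with hC₀
  have hC₀pos : 0 < C₀ := by positivity
  have hW'bd : ∀ p ∈ Ico (α - δ₁) α, |W' p| ≤ C₀ * Real.sqrt (α - p) := by
    intro p hp
    have hb1 := hbnd1 p ⟨hp.1, hp.2.le⟩
    have hb2 := hbnd2 p ⟨hp.1, hp.2.le⟩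
    have hsp := (hspos p hp.2).le
    have hκs : 0 ≤ κ * Real.sqrt (α - p) := mul_nonneg hκ.le hsp
    have habs1 : |q1 p| ≤ K * Real.sqrt (α - p) := by
      rw [abs_le]; constructor <;> [linarith [hb1.2]; linarith [hb1.1, hκs]]
    have habs2 : |q2 p| ≤ K * Real.sqrt (α - p) := by
      rw [abs_le]; constructor <;> [linarith [hb2.2]; linarith [hb2.1, hκs]]
    calc |W' p| ≤ |2 * c2 * q2 p| + |2 * c1 * q1 p| := abs_sub _ _
      _ = 2 * |c2| * |q2 p| + 2 * |c1| * |q1 p| := by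
          rw [abs_mul, abs_mul, abs_mul, abs_mul, abs_two]
      _ ≤ 2 * |c2| * (K * Real.sqrt (α - p)) + 2 * |c1| * (K * Real.sqrt (α - p)) := by
          have h4 := abs_nonneg c1
          have h5 := abs_nonneg c2
          nlinarith [habs1, habs2, abs_nonneg (q1 p), abs_nonneg (q2 p)]
      _ ≤ C₀ * Real.sqrt (α - p) := by nlinarith [hsp, abs_nonneg c1, abs_nonneg c2, hK]
  have hstage1a : ∀ p ∈ Icc (α - δ₁) α,
      W p ≤ 2 / 3 * C₀ * ((α - p) * Real.sqrt (α - p) ^ 1) :=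
    mono_up_top hδ₁ 1 hWat hWc hWα (by
      intro p hp
      have hb := abs_le.1 (hW'bd p ⟨hp.1.le, hp.2⟩)
      have heq : -(((1 : ℕ) + 2 : ℝ) / 2 * (2 / 3 * C₀) * Real.sqrt (α - p) ^ 1)
          = -(C₀ * Real.sqrt (α - p)) := by push_cast; ring
      rw [heq]
      linarith [hb.1])
  have hstage1b : ∀ p ∈ Icc (α - δ₁) α,
      -(2 / 3 * C₀) * ((α - p) * Real.sqrt (α - p) ^ 1) ≤ W p :=
    mono_down_top hδ₁ 1 hWat hWc hWα (Cst := -(2 / 3 * C₀)) (by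
      intro p hp
      have hb := abs_le.1 (hW'bd p ⟨hp.1.le, hp.2⟩)
      have heq : -(((1 : ℕ) + 2 : ℝ) / 2 * (-(2 / 3 * C₀)) * Real.sqrt (α - p) ^ 1)
          = C₀ * Real.sqrt (α - p) := by push_cast; ring
      rw [heq]
      linarith [hb.2])
  have hWb : ∀ p ∈ Icc (α - δ₁) α, |W p| ≤ 2 / 3 * C₀ * ((α - p) * Real.sqrt (α - p)) := by
    intro p hp
    rw [abs_le]
    constructor
    · have := hstage1b p hp; rw [pow_one] at this; linarith
    · have := hstage1a p hp; rw [pow_one] at this; linarith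
  have hdiffbd : ∀ p ∈ Ico (α - δ₁) α,
      |q1 p - q2 p| ≤ 2 / 3 * C₀ * (α - p) / (2 * κ) := by
    intro p hp
    have hb1 := hbnd1 p ⟨hp.1, hp.2.le⟩
    have hb2 := hbnd2 p ⟨hp.1, hp.2.le⟩
    have hsp := hspos p hp.2
    have hαp : 0 < α - p := by linarith [hp.2]
    have hsum : q1 p + q2 p ≤ -(2 * (κ * Real.sqrt (α - p))) := by
      linarith [hb1.1, hb2.1]
    have hsumneg : q1 p + q2 p < 0 := by
      have := mul_pos hκ hsp
      linarith [hsum]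
    have hfact : |W p| = |q1 p - q2 p| * |q1 p + q2 p| := by
      rw [← abs_mul]
      congr 1
      simp only [hWdef]; ring
    have habs_sum : 2 * κ * Real.sqrt (α - p) ≤ |q1 p + q2 p| := by
      rw [abs_of_neg hsumneg]; linarith
    have hpos : 0 < 2 * κ * Real.sqrt (α - p) := by positivity
    have key : |q1 p - q2 p| * (2 * κ * Real.sqrt (α - p))
        ≤ 2 / 3 * C₀ * ((α - p) * Real.sqrt (α - p)) := by
      calc |q1 p - q2 p| * (2 * κ * Real.sqrt (α - p))
          ≤ |q1 p - q2 p| * |q1 p + q2 p| :=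
            mul_le_mul_of_nonneg_left habs_sum (abs_nonneg _)
        _ = |W p| := hfact.symm
        _ ≤ 2 / 3 * C₀ * ((α - p) * Real.sqrt (α - p)) := hWb p ⟨hp.1, hp.2.le⟩
    have h6 : |q1 p - q2 p| ≤ 2 / 3 * C₀ * ((α - p) * Real.sqrt (α - p)) / (2 * κ * Real.sqrt (α - p)) := by
      rw [le_div_iff₀ hpos]
      exact key
    calc |q1 p - q2 p|
        ≤ 2 / 3 * C₀ * ((α - p) * Real.sqrt (α - p)) / (2 * κ * Real.sqrt (α - p)) := h6
      _ = 2 / 3 * C₀ * (α - p) / (2 * κ) := by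
          rw [div_eq_div_iff (by positivity) (by positivity)]
          ring
  set T₁ := 2 * |c1| * (2 / 3 * C₀) / (2 * κ) with hT₁
  have hT₁nn : 0 ≤ T₁ := by positivity
  set A := (c2 - c1) * κ with hA
  have hApos : 0 < A := mul_pos hc' hκ
  set δ₂ := min δ₁ ((A / (T₁ + 1)) ^ 2) with hδ₂def
  have hδ₂pos : 0 < δ₂ := lt_min hδ₁ (by positivity)
  have hδ₂le : δ₂ ≤ δ₁ := min_le_left _ _
  have hW'neg : ∀ p ∈ Ioo (α - δ₂) α, W' p ≤ -(A * Real.sqrt (α - p)) := by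
    intro p hp
    have hpIco : p ∈ Ico (α - δ₁) α := ⟨by linarith [hp.1, hδ₂le], hp.2⟩
    have hsp := hspos p hp.2
    have hαp : 0 < α - p := by linarith [hp.2]
    have hb2 := hbnd2 p ⟨hpIco.1, hp.2.le⟩
    have hX := hdiffbd p hpIco
    have hsle : Real.sqrt (α - p) ≤ A / (T₁ + 1) := by
      have ha1 : α - p < (A / (T₁ + 1)) ^ 2 := by
        have : δ₂ ≤ (A / (T₁ + 1)) ^ 2 := min_le_right _ _
        linarith [hp.1]
      calc Real.sqrt (α - p) ≤ Real.sqrt ((A / (T₁ + 1)) ^ 2) := Real.sqrt_le_sqrt ha1.le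
        _ = A / (T₁ + 1) := Real.sqrt_sq (by positivity)
    have hsq_sp : Real.sqrt (α - p) ^ 2 = α - p := Real.sq_sqrt hαp.le
    have ht1 : -(2 * c1 * (q1 p - q2 p)) ≤ T₁ * (α - p) := by
      have h6 : -(2 * c1 * (q1 p - q2 p)) ≤ 2 * |c1| * |q1 p - q2 p| := by
        calc -(2 * c1 * (q1 p - q2 p)) ≤ |2 * c1 * (q1 p - q2 p)| := neg_le_abs _
          _ = 2 * |c1| * |q1 p - q2 p| := by rw [abs_mul, abs_mul, abs_two]
      have h8 : 2 * |c1| * |q1 p - q2 p| ≤ 2 * |c1| * (2 / 3 * C₀ * (α - p) / (2 * κ)) :=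
        mul_le_mul_of_nonneg_left hX (by positivity)
      have h9 : 2 * |c1| * (2 / 3 * C₀ * (α - p) / (2 * κ)) = T₁ * (α - p) := by
        rw [hT₁]; ring
      linarith
    have ht2 : 2 * (c2 - c1) * q2 p ≤ -(2 * A * Real.sqrt (α - p)) := by
      have h10 : κ * Real.sqrt (α - p) ≤ -q2 p := hb2.1
      have h11 : q2 p ≤ -(κ * Real.sqrt (α - p)) := by linarith
      calc 2 * (c2 - c1) * q2 p ≤ 2 * (c2 - c1) * (-(κ * Real.sqrt (α - p))) := by
            apply mul_le_mul_of_nonneg_left h11 (by linarith)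
        _ = -(2 * A * Real.sqrt (α - p)) := by rw [hA]; ring
    have ht3 : T₁ * (α - p) ≤ A * Real.sqrt (α - p) := by
      have h12 : T₁ * Real.sqrt (α - p) ≤ T₁ * (A / (T₁ + 1)) :=
        mul_le_mul_of_nonneg_left hsle hT₁nn
      have h13 : T₁ * (A / (T₁ + 1)) ≤ A := by
        have heq2 : T₁ * (A / (T₁ + 1)) = T₁ * A / (T₁ + 1) := by ring
        rw [heq2, div_le_iff₀ (by positivity : (0:ℝ) < T₁ + 1)]
        nlinarith [hApos.le]
      have h14 : T₁ * Real.sqrt (α - p) ≤ A := le_trans h12 h13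
      calc T₁ * (α - p) = T₁ * Real.sqrt (α - p) * Real.sqrt (α - p) := by
            linear_combination (-T₁) * hsq_sp
        _ ≤ A * Real.sqrt (α - p) := mul_le_mul_of_nonneg_right h14 hsp.le
    have hsplit : W' p = -(2 * c1 * (q1 p - q2 p)) + 2 * (c2 - c1) * q2 p := by
      simp only [hW'def]; ring
    rw [hsplit]
    linarith [ht1, ht2, ht3]
  refine ⟨δ₂, hδ₂pos, by linarith [hδ₂le, hδ₁a, hδa2], ?_⟩
  have hfin : ∀ p ∈ Icc (α - δ₂) α,
      2 / 3 * A * ((α - p) * Real.sqrt (α - p) ^ 1) ≤ W p :=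
    mono_down_top hδ₂pos 1 (W := W) (W' := W')
      (fun p hp => hWat p ⟨by linarith [hp.1, hδ₂le], hp.2⟩)
      (hWc.mono (Icc_subset_Icc (by linarith [hδ₂le]) le_rfl)) hWα
      (by
        intro p hp
        have hne := hW'neg p hp
        have heq : -(((1 : ℕ) + 2 : ℝ) / 2 * (2 / 3 * A) * Real.sqrt (α - p) ^ 1)
            = -(A * Real.sqrt (α - p)) := by push_cast; ring
        rw [heq]
        exact hne)
  intro p hp
  have hαp : 0 < α - p := by linarith [hp.2]
  have hsp := hspos p hp.2
  have hW_pos : 0 < W p := by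
    have h0 := hfin p ⟨hp.1.le, hp.2.le⟩
    have h1 : 0 < 2 / 3 * A * ((α - p) * Real.sqrt (α - p) ^ 1) := by
      rw [pow_one]
      have := mul_pos hαp hsp
      nlinarith [hApos]
    exact lt_of_lt_of_le h1 h0
  have hq1neg : q1 p < 0 := h1.neg p ⟨by linarith [hp.1, hδ₂le, hδ₁a, hδa2], hp.2⟩
  have hq2neg : q2 p < 0 := h2.neg p ⟨by linarith [hp.1, hδ₂le, hδ₁b, hδb2], hp.2⟩
  have hsq : q2 p ^ 2 < q1 p ^ 2 := by
    simp only [hWdef] at hW_pos; linarith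
  exact ⟨hsq, neg_lt_neg_of_sq hq1neg hq2neg hsq⟩


/-! ### Equal-speed comparison near the top endpoint -/

lemma strip_equal {f : ℝ → ℝ} {S : Set ℝ} {c α β1 β2 m M δ : ℝ} {q1 q2 : ℝ → ℝ}
    (h1 : TD f S c α β1 q1) (h2 : TD f S c α β2 q2)
    (hδ : 0 < δ) (hβ1 : β1 ≤ α - δ) (hβ2 : β2 ≤ α - δ)
    (hm : 0 < m) (hmM : m ≤ M)
    (hf : ∀ u ∈ Ioo (α - δ) α, m ≤ f u ∧ f u ≤ M)
    (hfree : Ioo (α - δ) α ∩ S = ∅) :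
    ∃ δ', 0 < δ' ∧ δ' ≤ δ ∧ ∀ p ∈ Ioo (α - δ') α, q1 p = q2 p := by
  obtain ⟨δa, hδa, hδa2, hdera, hsqa⟩ := h1.sq_bounds hδ hβ1 hm hmM hf hfree
  obtain ⟨δb, hδb, hδb2, hderb, hsqb⟩ := h2.sq_bounds hδ hβ2 hm hmM hf hfree
  set κ := Real.sqrt (3 / 2 * m) with hκdef
  set K := Real.sqrt (3 * M) with hKdef
  have hMpos : 0 < M := lt_of_lt_of_le hm hmM
  have hκ : 0 < κ := Real.sqrt_pos.2 (by linarith)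
  have hK : 0 < K := Real.sqrt_pos.2 (by linarith)
  set δ₁ := min δa δb with hδ₁def
  have hδ₁ : 0 < δ₁ := lt_min hδa hδb
  have hδ₁a : δ₁ ≤ δa := min_le_left _ _
  have hδ₁b : δ₁ ≤ δb := min_le_right _ _
  set W := fun p => q1 p ^ 2 - q2 p ^ 2 with hWdef
  set W' := fun p => 2 * c * q2 p - 2 * c * q1 p with hW'def
  have hWat : ∀ p ∈ Ico (α - δ₁) α, HasDerivAt W (W' p) p := by
    intro p hp
    have ha := (hdera p ⟨by linarith [hp.1], hp.2⟩).2.2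
    have hb := (hderb p ⟨by linarith [hp.1], hp.2⟩).2.2
    have hsum := ha.sub hb
    refine hsum.congr_deriv ?_
    simp only [hW'def]
    ring
  have hWc : ContinuousOn W (Icc (α - δ₁) α) := by
    have c1' : ContinuousOn q1 (Icc (α - δ₁) α) :=
      h1.cont.mono (fun p hp => ⟨by linarith [hp.1, hδa2], hp.2⟩)
    have c2' : ContinuousOn q2 (Icc (α - δ₁) α) :=
      h2.cont.mono (fun p hp => ⟨by linarith [hp.1, hδb2], hp.2⟩)
    exact (c1'.pow 2).sub (c2'.pow 2)
  have hWα : W α = 0 := by simp only [hWdef, h1.top, h2.top]; ring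
  have hspos : ∀ p, p < α → 0 < Real.sqrt (α - p) :=
    fun p hp => Real.sqrt_pos.2 (by linarith)
  have hbnd1 : ∀ p ∈ Icc (α - δ₁) α,
      κ * Real.sqrt (α - p) ≤ -q1 p ∧ -q1 p ≤ K * Real.sqrt (α - p) :=
    fun p hp => hsqa p ⟨by linarith [hp.1], hp.2⟩
  have hbnd2 : ∀ p ∈ Icc (α - δ₁) α,
      κ * Real.sqrt (α - p) ≤ -q2 p ∧ -q2 p ≤ K * Real.sqrt (α - p) :=
    fun p hp => hsqb p ⟨by linarith [hp.1], hp.2⟩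
  have hq1sq : ∀ p ∈ Icc (α - δ₁) α, q1 p ^ 2 ≤ K ^ 2 * (α - p) := by
    intro p hp
    have hb := hbnd1 p hp
    have h0 : 0 ≤ -q1 p := le_trans (by positivity) hb.1
    have := pow_le_pow_left₀ h0 hb.2 2
    calc q1 p ^ 2 = (-q1 p) ^ 2 := by ring
      _ ≤ (K * Real.sqrt (α - p)) ^ 2 := this
      _ = K ^ 2 * (α - p) := by
          rw [mul_pow, Real.sq_sqrt (by linarith [hp.2] : (0:ℝ) ≤ α - p)]
  have hq2sq : ∀ p ∈ Icc (α - δ₁) α, q2 p ^ 2 ≤ K ^ 2 * (α - p) := by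
    intro p hp
    have hb := hbnd2 p hp
    have h0 : 0 ≤ -q2 p := le_trans (by positivity) hb.1
    have := pow_le_pow_left₀ h0 hb.2 2
    calc q2 p ^ 2 = (-q2 p) ^ 2 := by ring
      _ ≤ (K * Real.sqrt (α - p)) ^ 2 := this
      _ = K ^ 2 * (α - p) := by
          rw [mul_pow, Real.sq_sqrt (by linarith [hp.2] : (0:ℝ) ≤ α - p)]
  set Cg := |c| / κ with hCg
  have hCgnn : 0 ≤ Cg := by positivity
  have hdiv : ∀ p ∈ Ico (α - δ₁) α,
      |W' p| * Real.sqrt (α - p) ≤ Cg * |W p| := by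
    intro p hp
    have hb1 := hbnd1 p ⟨hp.1, hp.2.le⟩
    have hb2 := hbnd2 p ⟨hp.1, hp.2.le⟩
    have hsp := hspos p hp.2
    have hsum : q1 p + q2 p ≤ -(2 * (κ * Real.sqrt (α - p))) := by
      linarith [hb1.1, hb2.1]
    have hsumneg : q1 p + q2 p < 0 := by
      have := mul_pos hκ hsp
      linarith [hsum]
    have hfact : |W p| = |q1 p - q2 p| * |q1 p + q2 p| := by
      rw [← abs_mul]
      congr 1
      simp only [hWdef]; ring
    have habs_sum : 2 * κ * Real.sqrt (α - p) ≤ |q1 p + q2 p| := by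
      rw [abs_of_neg hsumneg]; linarith
    have hW'eq : |W' p| = 2 * |c| * |q1 p - q2 p| := by
      have : W' p = -(2 * c * (q1 p - q2 p)) := by simp only [hW'def]; ring
      rw [this, abs_neg, abs_mul, abs_mul, abs_two]
    rw [hW'eq, hfact]
    calc 2 * |c| * |q1 p - q2 p| * Real.sqrt (α - p)
        = |c| / κ * (|q1 p - q2 p| * (2 * κ * Real.sqrt (α - p))) := by
          field_simp
      _ ≤ |c| / κ * (|q1 p - q2 p| * |q1 p + q2 p|) := by
          apply mul_le_mul_of_nonneg_left _ (by positivity)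
          exact mul_le_mul_of_nonneg_left habs_sum (abs_nonneg _)
      _ = Cg * (|q1 p - q2 p| * |q1 p + q2 p|) := by rw [hCg]
  have hInd : ∀ n : ℕ, ∀ p ∈ Icc (α - δ₁) α,
      |W p| ≤ 2 * K ^ 2 * Cg ^ n * ((α - p) * Real.sqrt (α - p) ^ n) := by
    intro n
    induction n with
    | zero =>
      intro p hp
      have h1' := hq1sq p hp
      have h2' := hq2sq p hp
      have hnn1 : (0:ℝ) ≤ q1 p ^ 2 := sq_nonneg _
      have hnn2 : (0:ℝ) ≤ q2 p ^ 2 := sq_nonneg _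
      simp only [pow_zero, mul_one, one_mul]
      rw [abs_le]
      constructor
      · simp only [hWdef]; nlinarith
      · simp only [hWdef]; nlinarith
    | succ n ih =>
      have hbd : ∀ p ∈ Ioo (α - δ₁) α,
          |W' p| ≤ 2 * K ^ 2 * Cg ^ (n + 1) * Real.sqrt (α - p) ^ (n + 1) := by
        intro p hp
        have hsp := hspos p hp.2
        have hαp : (0:ℝ) < α - p := by linarith [hp.2]
        have hd := hdiv p ⟨hp.1.le, hp.2⟩
        have hih := ih p ⟨hp.1.le, hp.2.le⟩
        have hstep : |W' p| * Real.sqrt (α - p)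
            ≤ Cg * (2 * K ^ 2 * Cg ^ n * ((α - p) * Real.sqrt (α - p) ^ n)) :=
          le_trans hd (mul_le_mul_of_nonneg_left hih hCgnn)
        have heq : Cg * (2 * K ^ 2 * Cg ^ n * ((α - p) * Real.sqrt (α - p) ^ n))
            = 2 * K ^ 2 * Cg ^ (n + 1) * Real.sqrt (α - p) ^ (n + 1) * Real.sqrt (α - p) := by
          have hsq_sp : Real.sqrt (α - p) ^ 2 = α - p := Real.sq_sqrt hαp.le
          rw [pow_succ Cg n, pow_succ (Real.sqrt (α - p)) n]
          linear_combination (-(2 * K ^ 2 * Cg ^ n * Cg * Real.sqrt (α - p) ^ n)) * hsq_sp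
        rw [heq] at hstep
        have := le_of_mul_le_mul_right hstep hsp
        exact this
      have hup : ∀ p ∈ Icc (α - δ₁) α,
          W p ≤ 2 * K ^ 2 * Cg ^ (n + 1) * ((α - p) * Real.sqrt (α - p) ^ (n + 1)) := by
        apply mono_up_top hδ₁ (n + 1) hWat hWc hWα
        intro p hp
        have hb := abs_le.1 (hbd p hp)
        have hcoef : 2 * K ^ 2 * Cg ^ (n + 1) * Real.sqrt (α - p) ^ (n + 1)
            ≤ ((n + 1 : ℕ) + 2 : ℝ) / 2 * (2 * K ^ 2 * Cg ^ (n + 1)) * Real.sqrt (α - p) ^ (n + 1) := by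
          have hnn : (0:ℝ) ≤ 2 * K ^ 2 * Cg ^ (n + 1) * Real.sqrt (α - p) ^ (n + 1) := by positivity
          have : (1:ℝ) ≤ ((n + 1 : ℕ) + 2 : ℝ) / 2 := by push_cast; linarith [Nat.cast_nonneg (α := ℝ) n]
          nlinarith
        exact le_trans (neg_le_neg hcoef) hb.1
      have hdown : ∀ p ∈ Icc (α - δ₁) α,
          -(2 * K ^ 2 * Cg ^ (n + 1)) * ((α - p) * Real.sqrt (α - p) ^ (n + 1)) ≤ W p := by
        apply mono_down_top hδ₁ (n + 1) hWat hWc hWα (Cst := -(2 * K ^ 2 * Cg ^ (n + 1)))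
        intro p hp
        have hb := abs_le.1 (hbd p hp)
        have hcoef : 2 * K ^ 2 * Cg ^ (n + 1) * Real.sqrt (α - p) ^ (n + 1)
            ≤ ((n + 1 : ℕ) + 2 : ℝ) / 2 * (2 * K ^ 2 * Cg ^ (n + 1)) * Real.sqrt (α - p) ^ (n + 1) := by
          have hnn : (0:ℝ) ≤ 2 * K ^ 2 * Cg ^ (n + 1) * Real.sqrt (α - p) ^ (n + 1) := by positivity
          have : (1:ℝ) ≤ ((n + 1 : ℕ) + 2 : ℝ) / 2 := by push_cast; linarith [Nat.cast_nonneg (α := ℝ) n]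
          nlinarith
        have heq : -(((n + 1 : ℕ) + 2 : ℝ) / 2 * (-(2 * K ^ 2 * Cg ^ (n + 1))) * Real.sqrt (α - p) ^ (n + 1))
            = ((n + 1 : ℕ) + 2 : ℝ) / 2 * (2 * K ^ 2 * Cg ^ (n + 1)) * Real.sqrt (α - p) ^ (n + 1) := by
          ring
        rw [heq]
        exact le_trans hb.2 hcoef
      intro p hp
      rw [abs_le]
      constructor
      · have := hdown p hp; linarith
      · exact hup p hp
  refine ⟨min δ₁ (1 / (2 * Cg + 1) ^ 2), lt_min hδ₁ (by positivity), by
    linarith [min_le_left δ₁ ((1:ℝ) / (2 * Cg + 1) ^ 2), hδ₁a, hδa2], ?_⟩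
  intro p hp
  have hp1 : p ∈ Ioo (α - δ₁) α := ⟨by linarith [hp.1, min_le_left δ₁ ((1:ℝ) / (2 * Cg + 1) ^ 2)], hp.2⟩
  have hαp : (0:ℝ) < α - p := by linarith [hp.2]
  have hsp := hspos p hp.2
  have hCs : Cg * Real.sqrt (α - p) ≤ 1 / 2 := by
    have h1' : α - p < (1 / (2 * Cg + 1)) ^ 2 := by
      have h2' : min δ₁ (1 / (2 * Cg + 1) ^ 2) ≤ 1 / (2 * Cg + 1) ^ 2 := min_le_right _ _
      have h3' : (1:ℝ) / (2 * Cg + 1) ^ 2 = (1 / (2 * Cg + 1)) ^ 2 := by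
        rw [div_pow]; norm_num
      linarith [hp.1]
    have h4' : Real.sqrt (α - p) ≤ 1 / (2 * Cg + 1) := by
      calc Real.sqrt (α - p) ≤ Real.sqrt ((1 / (2 * Cg + 1)) ^ 2) := Real.sqrt_le_sqrt h1'.le
        _ = 1 / (2 * Cg + 1) := Real.sqrt_sq (by positivity)
    calc Cg * Real.sqrt (α - p) ≤ Cg * (1 / (2 * Cg + 1)) :=
          mul_le_mul_of_nonneg_left h4' hCgnn
      _ ≤ 1 / 2 := by
          rw [mul_one_div, div_le_div_iff₀ (by positivity) (by norm_num : (0:ℝ) < 2)]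
          linarith
  have hbound : ∀ n : ℕ, |W p| ≤ 2 * K ^ 2 * (α - p) * (1 / 2) ^ n := by
    intro n
    have h5' := hInd n p ⟨hp1.1.le, hp1.2.le⟩
    have h6' : 2 * K ^ 2 * Cg ^ n * ((α - p) * Real.sqrt (α - p) ^ n)
        = 2 * K ^ 2 * (α - p) * (Cg * Real.sqrt (α - p)) ^ n := by
      rw [mul_pow]; ring
    rw [h6'] at h5'
    have h7' : (Cg * Real.sqrt (α - p)) ^ n ≤ (1 / 2 : ℝ) ^ n :=
      pow_le_pow_left₀ (by positivity) hCs n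
    have h8' : 2 * K ^ 2 * (α - p) * (Cg * Real.sqrt (α - p)) ^ n
        ≤ 2 * K ^ 2 * (α - p) * (1 / 2) ^ n := by
      apply mul_le_mul_of_nonneg_left h7' (by positivity)
    linarith
  have htend : Tendsto (fun n : ℕ => 2 * K ^ 2 * (α - p) * (1 / 2 : ℝ) ^ n) atTop (𝓝 0) := by
    have := tendsto_pow_atTop_nhds_zero_of_lt_one (by norm_num : (0:ℝ) ≤ 1/2) (by norm_num : (1/2:ℝ) < 1)
    have h9' := this.const_mul (2 * K ^ 2 * (α - p))
    simpa using h9'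
  have habs0 : |W p| ≤ 0 := ge_of_tendsto htend (Filter.Eventually.of_forall hbound)
  have hW0 : W p = 0 := abs_eq_zero.1 (le_antisymm habs0 (abs_nonneg _))
  have hq1neg : q1 p < 0 := h1.neg p ⟨by linarith [hp1.1, hδ₁a, hδa2], hp.2⟩
  have hq2neg : q2 p < 0 := h2.neg p ⟨by linarith [hp1.1, hδ₁b, hδb2], hp.2⟩
  apply neg_eq_of_sq hq1neg hq2neg
  simp only [hWdef] at hW0
  linarith


/-! ### Downward propagation of the strict ordering of trajectories -/

lemma prop_down {f : ℝ → ℝ} {S : Set ℝ} (hS : S.Finite) {c1 c2 l u p₀ : ℝ} {q1 q2 : ℝ → ℝ}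
    (hlu : l < u) (hp₀ : p₀ ∈ Ioo l u)
    (hcont1 : ContinuousOn q1 (Icc l u)) (hcont2 : ContinuousOn q2 (Icc l u))
    (hneg : ∀ p ∈ Ioo l u, q1 p < 0 ∧ q2 p < 0)
    (hode1 : ∀ p ∈ Ioo l u, p ∉ S → HasDerivAt q1 (-c1 - f p / q1 p) p)
    (hode2 : ∀ p ∈ Ioo l u, p ∉ S → HasDerivAt q2 (-c2 - f p / q2 p) p)
    (hc : c1 < c2)
    (hanc : ∀ p ∈ Ico p₀ u, q2 p ^ 2 < q1 p ^ 2) :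
    ∀ p ∈ Ioo l u, q2 p ^ 2 < q1 p ^ 2 := by
  set D := fun p => q1 p ^ 2 - q2 p ^ 2 with hDdef
  have hDcont : ContinuousOn D (Icc l u) := (hcont1.pow 2).sub (hcont2.pow 2)
  have hDder : ∀ p ∈ Ioo l u, p ∉ S →
      HasDerivAt D (2 * c2 * q2 p - 2 * c1 * q1 p) p := by
    intro p hp hpS
    have h1 := (hode1 p hp hpS).pow 2
    have h2 := (hode2 p hp hpS).pow 2
    have := h1.sub h2
    refine this.congr_deriv ?_
    have hq1 : q1 p ≠ 0 := ne_of_lt (hneg p hp).1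
    have hq2 : q2 p ≠ 0 := ne_of_lt (hneg p hp).2
    field_simp
    ring
  by_contra hbad
  push_neg at hbad
  obtain ⟨b, hb, hDb⟩ := hbad
  have hbp₀ : b < p₀ := by
    by_contra hge
    push_neg at hge
    exact absurd (hanc b ⟨hge, hb.2⟩) (not_lt.2 hDb)
  -- the set where D ≤ 0
  set A := {p ∈ Icc b p₀ | D p ≤ 0} with hA
  have hAsub : A ⊆ Icc b p₀ := fun p hp => hp.1
  have hAne : A.Nonempty := ⟨b, ⟨le_rfl, hbp₀.le⟩, by simp only [hDdef]; linarith⟩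
  have hIccsub : Icc b p₀ ⊆ Ioo l u := fun p hp => ⟨lt_of_lt_of_le hb.1 hp.1, lt_of_le_of_lt hp.2 hp₀.2⟩
  have hAclosed : IsClosed A := by
    have : A = Icc b p₀ ∩ D ⁻¹' (Iic 0) := by
      ext p; simp [hA, mem_setOf_eq, and_comm]
    rw [this]
    apply ContinuousOn.preimage_isClosed_of_isClosed
      (hDcont.mono (fun p hp => (Ioo_subset_Icc_self (hIccsub hp)))) isClosed_Icc isClosed_Iic
  set z := sSup A with hz
  have hzA : z ∈ A := hAclosed.csSup_mem hAne (BddAbove.mono hAsub (bddAbove_Icc))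
  have hzIoo : z ∈ Ioo l u := hIccsub (hAsub hzA)
  have hzp₀ : z < p₀ := by
    rcases lt_or_eq_of_le (hAsub hzA).2 with h | h
    · exact h
    · exfalso
      have := hanc p₀ ⟨le_rfl, hp₀.2⟩
      have hD0 : D p₀ ≤ 0 := by rw [← h]; exact hzA.2
      simp only [hDdef] at hD0
      linarith
  have hDpos : ∀ p, z < p → p ≤ p₀ → 0 < D p := by
    intro p hp1 hp2
    rcases le_or_gt p₀ p with h | h
    · have := hanc p ⟨le_of_le_of_eq h rfl, lt_of_le_of_lt hp2 hp₀.2⟩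
      simp only [hDdef]; linarith [this]
    · by_contra hle
      push_neg at hle
      have hpA : p ∈ A := ⟨⟨le_trans (hAsub hzA).1 (le_of_lt hp1), hp2⟩, hle⟩
      exact absurd (le_csSup (BddAbove.mono hAsub (bddAbove_Icc)) hpA) (not_le.2 hp1)
  have hDz : D z = 0 := by
    have hct : ContinuousWithinAt D (Icc l u) z := hDcont z (Ioo_subset_Icc_self hzIoo)
    have hct2 : Tendsto D (𝓝[Ioc z p₀] z) (𝓝 (D z)) := by
      apply hct.tendsto.mono_left
      apply nhdsWithin_mono
      intro p hp
      exact Ioo_subset_Icc_self (hIccsub ⟨le_trans (hAsub hzA).1 hp.1.le, hp.2⟩)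
    have hne2 : (𝓝[Ioc z p₀] z).NeBot := by
      rw [← mem_closure_iff_nhdsWithin_neBot, closure_Ioc (ne_of_lt hzp₀)]
      exact ⟨le_rfl, hzp₀.le⟩
    have hge : 0 ≤ D z := by
      apply ge_of_tendsto hct2
      filter_upwards [self_mem_nhdsWithin] with p hp
      exact (hDpos p hp.1 hp.2).le
    exact le_antisymm hzA.2 hge
  have hq12z : q1 z = q2 z := by
    have hnegz := hneg z hzIoo
    apply neg_eq_of_sq hnegz.1 hnegz.2
    simp only [hDdef] at hDz
    linarith
  -- local strict decrease of D at z
  set E := fun p => 2 * c2 * q2 p - 2 * c1 * q1 p with hE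
  have hEcont : ContinuousAt E z := by
    have h1 : ContinuousAt q1 z := by
      apply (hcont1.continuousAt (Icc_mem_nhds hzIoo.1 hzIoo.2))
    have h2 : ContinuousAt q2 z := by
      apply (hcont2.continuousAt (Icc_mem_nhds hzIoo.1 hzIoo.2))
    exact ((continuousAt_const.mul h2).sub (continuousAt_const.mul h1))
  have hEz : E z < 0 := by
    simp only [hE]
    rw [← hq12z]
    have := (hneg z hzIoo).1
    nlinarith [sub_pos.2 hc]
  have hEev : ∀ᶠ p in 𝓝 z, E p < 0 ∧ p ∈ Ioo l u := by
    have h1 : ∀ᶠ p in 𝓝 z, E p < 0 := by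
      have := hEcont.tendsto
      exact this.eventually (eventually_lt_nhds hEz)
    have h2 : ∀ᶠ p in 𝓝 z, p ∈ Ioo l u := (isOpen_Ioo.mem_nhds hzIoo)
    exact h1.and h2
  obtain ⟨ν, hνpos, hν⟩ := Metric.eventually_nhds_iff.1 hEev
  set y := min (z + ν / 2) ((z + p₀) / 2) with hy
  have hzy : z < y := by
    apply lt_min
    · linarith
    · linarith
  have hyν : ∀ p ∈ Icc z y, dist p z < ν := by
    intro p hp
    rw [Real.dist_eq, abs_lt]
    constructor
    · linarith [hp.1]
    · have : y ≤ z + ν / 2 := min_le_left _ _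
      have := hp.2
      linarith
  have hyp₀ : y ≤ p₀ := by
    have : y ≤ (z + p₀) / 2 := min_le_right _ _
    linarith
  have hkey : D y < D z := by
    apply strict_anti_exc hS hzy
    · apply hDcont.mono
      intro p hp
      exact Ioo_subset_Icc_self (hν (hyν p hp)).2
    · intro p hp hpS
      exact hDder p (hν (hyν p (Ioo_subset_Icc_self hp))).2 hpS
    · intro p hp hpS
      exact (hν (hyν p (Ioo_subset_Icc_self hp))).1
  rw [hDz] at hkey
  have := hDpos y hzy hyp₀
  linarith


/-! ### Downward propagation of equality of trajectories (Gronwall) -/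

lemma gron_down {f : ℝ → ℝ} {S : Set ℝ} (hS : S.Finite) {c l u p₀ : ℝ} {q1 q2 : ℝ → ℝ}
    (hlu : l < u) (hp₀ : p₀ ∈ Ioo l u)
    (hcont1 : ContinuousOn q1 (Icc l u)) (hcont2 : ContinuousOn q2 (Icc l u))
    (hneg : ∀ p ∈ Ioo l u, q1 p < 0 ∧ q2 p < 0)
    (hode1 : ∀ p ∈ Ioo l u, p ∉ S → HasDerivAt q1 (-c - f p / q1 p) p)
    (hode2 : ∀ p ∈ Ioo l u, p ∉ S → HasDerivAt q2 (-c - f p / q2 p) p)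
    (hanc : ∀ p ∈ Ico p₀ u, q1 p = q2 p) :
    ∀ p ∈ Ioo l u, q1 p = q2 p := by
  set W := fun p => q1 p ^ 2 - q2 p ^ 2 with hWdef
  set W' := fun p => 2 * c * q2 p - 2 * c * q1 p with hW'def
  have hWder : ∀ p ∈ Ioo l u, p ∉ S → HasDerivAt W (W' p) p := by
    intro p hp hpS
    have h1 := (hode1 p hp hpS).pow 2
    have h2 := (hode2 p hp hpS).pow 2
    have := h1.sub h2
    refine this.congr_deriv ?_
    have hq1 : q1 p ≠ 0 := ne_of_lt (hneg p hp).1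
    have hq2 : q2 p ≠ 0 := ne_of_lt (hneg p hp).2
    simp only [hW'def]
    field_simp
    ring
  set u₀ := (p₀ + u) / 2 with hu₀
  have hu₀mem : u₀ ∈ Ico p₀ u := ⟨by rw [hu₀]; linarith [hp₀.2], by rw [hu₀]; linarith [hp₀.2]⟩
  have hp₀u₀ : p₀ < u₀ := by rw [hu₀]; linarith [hp₀.2]
  set T := {t | t ∈ Ioc l p₀ ∧ ∀ x ∈ Icc t u₀, q1 x = q2 x} with hT
  have hp₀T : p₀ ∈ T := by
    refine ⟨⟨hp₀.1, le_rfl⟩, ?_⟩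
    intro x hx
    exact hanc x ⟨hx.1, lt_of_le_of_lt hx.2 hu₀mem.2⟩
  have hTne : T.Nonempty := ⟨p₀, hp₀T⟩
  have hTbdd : BddBelow T := ⟨l, fun t ht => ht.1.1.le⟩
  set τ := sInf T with hτdef
  have hτle : τ ≤ p₀ := csInf_le hTbdd hp₀T
  have hτge : l ≤ τ := le_csInf hTne (fun t ht => ht.1.1.le)
  have hτeq : ∀ x, τ < x → x ≤ u₀ → q1 x = q2 x := by
    intro x hx1 hx2
    rcases le_or_gt p₀ x with h | h
    · exact hanc x ⟨h, lt_of_le_of_lt hx2 hu₀mem.2⟩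
    · obtain ⟨t, htT, htx⟩ := (csInf_lt_iff hTbdd hTne).1 hx1
      exact htT.2 x ⟨htx.le, hx2⟩
  have hτl : ¬ l < τ := by
    intro hlτ
    have hτu : τ < u := lt_of_le_of_lt hτle hp₀.2
    have hτIoo : τ ∈ Ioo l u := ⟨hlτ, hτu⟩
    -- q1 τ = q2 τ by continuity from the right
    have hWτeq : q1 τ = q2 τ := by
      have hne2 : (𝓝[Ioc τ u₀] τ).NeBot := by
        rw [← mem_closure_iff_nhdsWithin_neBot,
          closure_Ioc (ne_of_lt (lt_of_le_of_lt hτle hp₀u₀))]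
        exact ⟨le_rfl, (lt_of_le_of_lt hτle hp₀u₀).le⟩
      have hsub : Ioc τ u₀ ⊆ Icc l u :=
        fun x hx => ⟨le_trans hτge hx.1.le, le_trans hx.2 (le_of_lt hu₀mem.2)⟩
      have h1 : Tendsto q1 (𝓝[Ioc τ u₀] τ) (𝓝 (q1 τ)) :=
        ((hcont1 τ ⟨hτge, hτu.le⟩).tendsto).mono_left (nhdsWithin_mono _ hsub)
      have h2 : Tendsto q2 (𝓝[Ioc τ u₀] τ) (𝓝 (q2 τ)) :=
        ((hcont2 τ ⟨hτge, hτu.le⟩).tendsto).mono_left (nhdsWithin_mono _ hsub)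
      have heq : q1 =ᶠ[𝓝[Ioc τ u₀] τ] q2 := by
        filter_upwards [self_mem_nhdsWithin] with x hx
        exact hτeq x hx.1 hx.2
      exact tendsto_nhds_unique (h1.congr' heq) h2
    have hWτ : W τ = 0 := by simp only [hWdef, hWτeq]; ring
    set ν := (τ - l) / 2 with hν
    have hνpos : 0 < ν := by rw [hν]; linarith
    have hKsub : Icc (τ - ν) τ ⊆ Ioo l u := by
      intro x hx
      constructor
      · have := hx.1; rw [hν] at this; linarith
      · exact lt_of_le_of_lt hx.2 hτu
    -- uniform negativity bound on the compact interval
    have hgcont : ContinuousOn (fun p => -(q1 p + q2 p)) (Icc (τ - ν) τ) := by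
      apply ContinuousOn.neg
      exact ((hcont1.mono (fun x hx => Ioo_subset_Icc_self (hKsub hx))).add
        (hcont2.mono (fun x hx => Ioo_subset_Icc_self (hKsub hx))))
    have hKne : (Icc (τ - ν) τ).Nonempty := ⟨τ, by constructor <;> [linarith; exact le_rfl]⟩
    obtain ⟨x₀, hx₀K, hx₀min⟩ := isCompact_Icc.exists_isMinOn hKne hgcont
    set ρ := -(q1 x₀ + q2 x₀) with hρ
    have hρpos : 0 < ρ := by
      have := hneg x₀ (hKsub hx₀K)
      rw [hρ]; linarith [this.1, this.2]
    have hρbd : ∀ p ∈ Icc (τ - ν) τ, q1 p + q2 p ≤ -ρ := by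
      intro p hp
      have := hx₀min hp
      simp only [mem_setOf_eq] at this
      linarith [this]
    set M₀ := 2 * |c| / ρ with hM₀
    have hM₀nn : 0 ≤ M₀ := by positivity
    -- |W'| ≤ M₀ |W| on the interval
    have hW'bd : ∀ p ∈ Icc (τ - ν) τ, |W' p| ≤ M₀ * |W p| := by
      intro p hp
      have hnegp := hneg p (hKsub hp)
      have hfact : |W p| = |q1 p - q2 p| * |q1 p + q2 p| := by
        rw [← abs_mul]; congr 1; simp only [hWdef]; ring
      have hsum : |q1 p + q2 p| ≥ ρ := by
        rw [abs_of_neg (by linarith [hnegp.1, hnegp.2] : q1 p + q2 p < 0)]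
        linarith [hρbd p hp]
      have hW'eq : |W' p| = 2 * |c| * |q1 p - q2 p| := by
        have : W' p = -(2 * c * (q1 p - q2 p)) := by simp only [hW'def]; ring
        rw [this, abs_neg, abs_mul, abs_mul, abs_two]
      rw [hW'eq, hfact]
      rw [hM₀]
      rw [div_mul_eq_mul_div, le_div_iff₀ hρpos]
      calc 2 * |c| * |q1 p - q2 p| * ρ ≤ 2 * |c| * |q1 p - q2 p| * |q1 p + q2 p| := by
            apply mul_le_mul_of_nonneg_left hsum (by positivity)
        _ = 2 * |c| * (|q1 p - q2 p| * |q1 p + q2 p|) := by ring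
    -- V = W² decays via Gronwall
    have hVzero : ∀ p ∈ Icc (τ - ν) τ, W p = 0 := by
      intro p hp
      set g2 := fun x => W x ^ 2 * Real.exp (2 * M₀ * x) with hg2
      have hg2mono : g2 p ≤ g2 τ := by
        apply mono_exc hS (g' := fun x =>
          (2 * W x * W' x) * Real.exp (2 * M₀ * x) + W x ^ 2 * (Real.exp (2 * M₀ * x) * (2 * M₀)))
          hp.2
        · apply ContinuousOn.mul
          · apply ContinuousOn.pow
            exact ((hcont1.mono (fun x hx => Ioo_subset_Icc_self (hKsub ⟨le_trans hp.1 hx.1, hx.2⟩))).pow 2).sub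
              ((hcont2.mono (fun x hx => Ioo_subset_Icc_self (hKsub ⟨le_trans hp.1 hx.1, hx.2⟩))).pow 2)
          · exact (Real.continuous_exp.comp (continuous_const.mul continuous_id)).continuousOn
        · intro x hx hxS
          have hxK : x ∈ Icc (τ - ν) τ := ⟨le_trans hp.1 hx.1.le, hx.2.le⟩
          have hWx := hWder x (hKsub hxK) hxS
          have hlin : HasDerivAt (fun y : ℝ => 2 * M₀ * y) (2 * M₀) x := by
            simpa using (hasDerivAt_id x).const_mul (2 * M₀)
          exact ((hWx.pow 2).mul hlin.exp) |>.congr_deriv (by push_cast; simp only [Pi.pow_apply]; ring)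
        · intro x hx hxS
          have hxK : x ∈ Icc (τ - ν) τ := ⟨le_trans hp.1 hx.1.le, hx.2.le⟩
          have hbd := hW'bd x hxK
          have hexp : 0 < Real.exp (2 * M₀ * x) := Real.exp_pos _
          have habs : 2 * W x * W' x ≥ -(2 * M₀ * W x ^ 2) := by
            have h1 : |2 * W x * W' x| ≤ 2 * M₀ * W x ^ 2 := by
              rw [abs_mul, abs_mul, abs_two]
              have : |W x| * |W' x| ≤ |W x| * (M₀ * |W x|) :=
                mul_le_mul_of_nonneg_left hbd (abs_nonneg _)
              calc 2 * |W x| * |W' x| ≤ 2 * (|W x| * (M₀ * |W x|)) := by linarith [this]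
                _ = 2 * M₀ * (|W x| * |W x|) := by ring
                _ = 2 * M₀ * W x ^ 2 := by rw [← abs_mul, ← pow_two, abs_of_nonneg (sq_nonneg _)]
                  -- may need fixing
            linarith [(abs_le.1 h1).1]
          nlinarith [hexp, habs]
      have hg2τ : g2 τ = 0 := by simp only [hg2, hWτ]; ring
      rw [hg2τ] at hg2mono
      have hexp : 0 < Real.exp (2 * M₀ * p) := Real.exp_pos _
      have hW2 : W p ^ 2 ≤ 0 := by
        by_contra hpos
        push_neg at hpos
        have : 0 < W p ^ 2 * Real.exp (2 * M₀ * p) := mul_pos hpos hexp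
        simp only [hg2] at hg2mono
        linarith
      have := sq_nonneg (W p)
      have hWp2 : W p ^ 2 = 0 := le_antisymm hW2 this
      exact pow_eq_zero_iff (by norm_num) |>.1 hWp2
    -- extend T below τ: contradiction with τ = sInf T
    have hτν : τ - ν ∈ T := by
      refine ⟨⟨by rw [hν]; linarith, by linarith⟩, ?_⟩
      intro x hx
      rcases le_or_gt x τ with h | h
      · have hxK : x ∈ Icc (τ - ν) τ := ⟨hx.1, h⟩
        have hW0 := hVzero x hxK
        have hnegx := hneg x (hKsub hxK)
        apply neg_eq_of_sq hnegx.1 hnegx.2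
        simp only [hWdef] at hW0
        linarith
      · exact hτeq x h hx.2
    have := csInf_le hTbdd hτν
    rw [← hτdef] at this
    linarith
  push_neg at hτl
  intro p hp
  rcases le_or_gt p₀ p with h | h
  · exact hanc p ⟨h, hp.2⟩
  · exact hτeq p (lt_of_le_of_lt hτl hp.1) (by linarith [hp₀u₀])


/-! ### Speed comparison lemmas -/

lemma JumpTop.shrink {f : ℝ → ℝ} {S : Set ℝ} {α : ℝ} (h : JumpTop f S α) {β : ℝ} (hβ : β < α) :
    ∃ δ m M, 0 < δ ∧ 0 < m ∧ m ≤ M ∧ β ≤ α - δ ∧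
      (∀ u ∈ Ioo (α - δ) α, m ≤ f u ∧ f u ≤ M) ∧ Ioo (α - δ) α ∩ S = ∅ := by
  obtain ⟨δJ, m, M, hδJ, hm, hmM, hfJ, hfreeJ⟩ := h
  refine ⟨min δJ (α - β), m, M, lt_min hδJ (by linarith), hm, hmM,
    by have := min_le_right δJ (α - β); linarith, ?_, ?_⟩
  · intro u hu
    exact hfJ u ⟨by linarith [hu.1, min_le_left δJ (α - β)], hu.2⟩
  · rw [Set.eq_empty_iff_forall_notMem]
    rintro p ⟨hp1, hp2⟩
    rw [Set.eq_empty_iff_forall_notMem] at hfreeJ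
    exact hfreeJ p ⟨⟨by linarith [hp1.1, min_le_left δJ (α - β)], hp1.2⟩, hp2⟩

lemma nhds_right_neBot {a b : ℝ} (hab : a < b) : (𝓝[Ioo a b] a).NeBot := by
  rw [← mem_closure_iff_nhdsWithin_neBot, closure_Ioo (ne_of_lt hab)]
  exact ⟨le_rfl, hab.le⟩

/-- Two trajectories with the same top: the one descending deeper is strictly slower. -/
lemma deeper_slower {f : ℝ → ℝ} {S : Set ℝ} (hS : S.Finite) {c1 c2 α β1 β2 : ℝ}
    {q1 q2 : ℝ → ℝ}
    (h1 : TD f S c1 α β1 q1) (h2 : TD f S c2 α β2 q2)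
    (hβ : β2 < β1) (hJ : JumpTop f S α) : c2 < c1 := by
  have hβ1α : β1 < α := h1.hlt
  obtain ⟨δ, m, M, hδpos, hm, hmM, hβ1δ, hf, hfree⟩ := hJ.shrink hβ1α
  have hβ2δ : β2 ≤ α - δ := by linarith
  by_contra hcon
  push_neg at hcon
  have hne : (𝓝[Ioo β1 α] β1).NeBot := nhds_right_neBot hβ1α
  have ht1 : Tendsto q1 (𝓝[Ioo β1 α] β1) (𝓝 0) := by
    have := (h1.cont β1 ⟨le_rfl, hβ1α.le⟩).tendsto
    rw [h1.bot] at this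
    exact this.mono_left (nhdsWithin_mono _ Ioo_subset_Icc_self)
  have hq2β1 : q2 β1 < 0 := h2.neg β1 ⟨hβ, hβ1α⟩
  have ht2 : Tendsto q2 (𝓝[Ioo β1 α] β1) (𝓝 (q2 β1)) := by
    have := (h2.cont β1 ⟨hβ.le, hβ1α.le⟩).tendsto
    exact this.mono_left (nhdsWithin_mono _ (fun x hx => ⟨by linarith [hx.1], hx.2.le⟩))
  have hconts1 : ContinuousOn q1 (Icc β1 α) := h1.cont
  have hconts2 : ContinuousOn q2 (Icc β1 α) :=
    h2.cont.mono (Icc_subset_Icc hβ.le le_rfl)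
  have hnegs : ∀ p ∈ Ioo β1 α, q1 p < 0 ∧ q2 p < 0 :=
    fun p hp => ⟨h1.neg p hp, h2.neg p ⟨lt_trans hβ hp.1, hp.2⟩⟩
  have hodes1 : ∀ p ∈ Ioo β1 α, p ∉ S → HasDerivAt q1 (-c1 - f p / q1 p) p :=
    fun p hp hpS => h1.ode p hp hpS
  have hodes2 : ∀ p ∈ Ioo β1 α, p ∉ S → HasDerivAt q2 (-c2 - f p / q2 p) p :=
    fun p hp hpS => h2.ode p ⟨lt_trans hβ hp.1, hp.2⟩ hpS
  rcases eq_or_lt_of_le hcon with heq | hlt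
  · -- equal speeds
    have h2' : TD f S c1 α β2 q2 := by rw [heq]; exact h2
    obtain ⟨δ', hδ'pos, hδ'le, hstrip⟩ := strip_equal h1 h2' hδpos hβ1δ hβ2δ hm hmM hf hfree
    set p₀ := max (α - δ' / 2) ((β1 + α) / 2) with hp₀def
    have hp₀mem : p₀ ∈ Ioo β1 α := by
      constructor
      · calc β1 < (β1 + α) / 2 := by linarith
          _ ≤ p₀ := le_max_right _ _
      · apply max_lt <;> linarith
    have hp₀gt : α - δ' < p₀ := by
      calc α - δ' < α - δ' / 2 := by linarith
        _ ≤ p₀ := le_max_left _ _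
    have hall := gron_down hS hβ1α hp₀mem hconts1 hconts2 hnegs
      (fun p hp hpS => by rw [heq] at hodes1; exact hodes1 p hp hpS) hodes2
      (fun p hp => hstrip p ⟨lt_of_lt_of_le hp₀gt hp.1, hp.2⟩)
    have heqf : q1 =ᶠ[𝓝[Ioo β1 α] β1] q2 := by
      filter_upwards [self_mem_nhdsWithin] with x hx
      exact hall x hx
    have huniq := tendsto_nhds_unique (ht1.congr' heqf) ht2
    linarith
  · obtain ⟨δ', hδ'pos, hδ'le, hstrip⟩ := strip_strict h1 h2 hδpos hβ1δ hβ2δ hm hmM hf hfree hlt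
    set p₀ := max (α - δ' / 2) ((β1 + α) / 2) with hp₀def
    have hp₀mem : p₀ ∈ Ioo β1 α := by
      constructor
      · calc β1 < (β1 + α) / 2 := by linarith
          _ ≤ p₀ := le_max_right _ _
      · apply max_lt <;> linarith
    have hp₀gt : α - δ' < p₀ := by
      calc α - δ' < α - δ' / 2 := by linarith
        _ ≤ p₀ := le_max_left _ _
    have hprop := prop_down hS hβ1α hp₀mem hconts1 hconts2 hnegs hodes1 hodes2 hlt
      (fun p hp => (hstrip p ⟨lt_of_lt_of_le hp₀gt hp.1, hp.2⟩).1)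
    have hev : q1 ≤ᶠ[𝓝[Ioo β1 α] β1] q2 := by
      filter_upwards [self_mem_nhdsWithin] with x hx
      exact (neg_lt_neg_of_sq (hnegs x hx).1 (hnegs x hx).2 (hprop x hx)).le
    have := le_of_tendsto_of_tendsto ht1 ht2 hev
    linarith

/-- Two trajectories with the same bottom: the one with the higher top is strictly faster. -/
lemma higher_faster {f : ℝ → ℝ} {S : Set ℝ} (hS : S.Finite) {c1 c2 α1 α2 β : ℝ}
    {q1 q2 : ℝ → ℝ}
    (h1 : TD f S c1 α1 β q1) (h2 : TD f S c2 α2 β q2)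
    (hα : α1 < α2) (hJ : JumpBot f S β) : c1 < c2 := by
  have hSr : (Neg.neg ⁻¹' S).Finite := hS.preimage (neg_injective.injOn)
  have := deeper_slower hSr h1.reflect h2.reflect (by
    show -α2 < -α1; linarith) hJ.reflect
  linarith

/-- Equal endpoints force equal speeds and equal trajectories. -/
lemma same_ends_aux {f : ℝ → ℝ} {S : Set ℝ} (hS : S.Finite) {c1 c2 α β : ℝ}
    {q1 q2 : ℝ → ℝ}
    (h1 : TD f S c1 α β q1) (h2 : TD f S c2 α β q2)
    (hJT : JumpTop f S α) (hJB : JumpBot f S β) (hc : c1 < c2) : False := by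
  have hβα : β < α := h1.hlt
  obtain ⟨δ, m, M, hδpos, hm, hmM, hβδ, hf, hfree⟩ := hJT.shrink hβα
  obtain ⟨δ', hδ'pos, hδ'le, hstrip⟩ := strip_strict h1 h2 hδpos hβδ hβδ hm hmM hf hfree hc
  set p₀ := max (α - δ' / 2) ((β + α) / 2) with hp₀def
  have hp₀mem : p₀ ∈ Ioo β α := by
    constructor
    · calc β < (β + α) / 2 := by linarith
        _ ≤ p₀ := le_max_right _ _
    · apply max_lt <;> linarith
  have hp₀gt : α - δ' < p₀ := by
    calc α - δ' < α - δ' / 2 := by linarith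
      _ ≤ p₀ := le_max_left _ _
  have hnegs : ∀ p ∈ Ioo β α, q1 p < 0 ∧ q2 p < 0 :=
    fun p hp => ⟨h1.neg p hp, h2.neg p hp⟩
  have hprop := prop_down hS hβα hp₀mem h1.cont h2.cont hnegs
    (fun p hp hpS => h1.ode p hp hpS) (fun p hp hpS => h2.ode p hp hpS) hc
    (fun p hp => (hstrip p ⟨lt_of_lt_of_le hp₀gt hp.1, hp.2⟩).1)
  -- now the reflected strict comparison near the bottom
  have hSr : (Neg.neg ⁻¹' S).Finite := hS.preimage (neg_injective.injOn)
  have hJTr := hJB.reflect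
  obtain ⟨δb, mb, Mb, hδbpos, hmb, hmbMb, hβδb, hfb, hfreeb⟩ := hJTr.shrink (by
    show -α < -β; linarith)
  obtain ⟨δ'', hδ''pos, hδ''le, hstripb⟩ := strip_strict h2.reflect h1.reflect hδbpos hβδb hβδb
    hmb hmbMb hfb hfreeb (by show -c2 < -c1; linarith)
  -- pick a point just above β
  set x := β + min δ'' (α - β) / 2 with hxdef
  have hmin : 0 < min δ'' (α - β) := lt_min hδ''pos (by linarith)
  have hx1 : β < x := by rw [hxdef]; linarith
  have hx2 : x < α := by
    rw [hxdef]
    have := min_le_right δ'' (α - β)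
    linarith
  have hxm : -x ∈ Ioo (-β - δ'') (-β) := by
    constructor
    · rw [hxdef]
      have := min_le_left δ'' (α - β)
      linarith
    · rw [hxdef]; linarith
  have hb := hstripb (-x) hxm
  have hb1 : q1 (- -x) ^ 2 < q2 (- -x) ^ 2 := hb.1
  rw [neg_neg] at hb1
  have := hprop x ⟨hx1, hx2⟩
  linarith

lemma same_ends {f : ℝ → ℝ} {S : Set ℝ} (hS : S.Finite) {c1 c2 α β : ℝ}
    {q1 q2 : ℝ → ℝ}
    (h1 : TD f S c1 α β q1) (h2 : TD f S c2 α β q2)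
    (hJT : JumpTop f S α) (hJB : JumpBot f S β) :
    c1 = c2 ∧ ∀ p ∈ Icc β α, q1 p = q2 p := by
  have hβα : β < α := h1.hlt
  have hceq : c1 = c2 := by
    rcases lt_trichotomy c1 c2 with h | h | h
    · exact absurd (same_ends_aux hS h1 h2 hJT hJB h) not_false
    · exact h
    · exact absurd (same_ends_aux hS h2 h1 hJT hJB h) not_false
  refine ⟨hceq, ?_⟩
  have h2' : TD f S c1 α β q2 := by rw [hceq]; exact h2
  obtain ⟨δ, m, M, hδpos, hm, hmM, hβδ, hf, hfree⟩ := hJT.shrink hβα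
  obtain ⟨δ', hδ'pos, hδ'le, hstrip⟩ := strip_equal h1 h2' hδpos hβδ hβδ hm hmM hf hfree
  set p₀ := max (α - δ' / 2) ((β + α) / 2) with hp₀def
  have hp₀mem : p₀ ∈ Ioo β α := by
    constructor
    · calc β < (β + α) / 2 := by linarith
        _ ≤ p₀ := le_max_right _ _
    · apply max_lt <;> linarith
  have hp₀gt : α - δ' < p₀ := by
    calc α - δ' < α - δ' / 2 := by linarith
      _ ≤ p₀ := le_max_left _ _
  have hall := gron_down hS hβα hp₀mem h1.cont h2.cont
    (fun p hp => ⟨h1.neg p hp, h2.neg p hp⟩)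
    (fun p hp hpS => h1.ode p hp hpS) (fun p hp hpS => h2'.ode p hp hpS)
    (fun p hp => hstrip p ⟨lt_of_lt_of_le hp₀gt hp.1, hp.2⟩)
  intro p hp
  rcases eq_or_lt_of_le hp.1 with hpβ | hpβ
  · rw [← hpβ, h1.bot, h2.bot]
  rcases eq_or_lt_of_le hp.2 with hpα | hpα
  · rw [hpα, h1.top, h2.top]
  exact hall p ⟨hpβ, hpα⟩


/-! ### Front structure : attainment of the limits -/

lemma antitone_deriv_nonpos {φ : ℝ → ℝ} (hφ : Differentiable ℝ φ) (h : Antitone φ) (z : ℝ) :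
    deriv φ z ≤ 0 := by
  have hd := (hφ z).hasDerivAt
  have hts : Tendsto (slope φ z) (𝓝[>] z) (𝓝 (deriv φ z)) :=
    (hasDerivAt_iff_tendsto_slope.1 hd).mono_left
      (nhdsWithin_mono _ (fun x hx => ne_of_gt hx))
  have hev : ∀ᶠ x in 𝓝[>] z, slope φ z x ≤ 0 := by
    filter_upwards [self_mem_nhdsWithin] with x hx
    have h1 : φ x ≤ φ z := h (le_of_lt hx)
    have h2 : (0:ℝ) < x - z := by simp only [mem_Ioi] at hx; linarith
    rw [slope_def_field]
    apply div_nonpos_of_nonpos_of_nonneg <;> linarith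
  exact le_of_tendsto hts hev

lemma attain_top {f : ℝ → ℝ} {φ : ℝ → ℝ} {α c δ m : ℝ}
    (hφ : ContDiff ℝ 1 φ) (hanti : Antitone φ)
    (hlim : Tendsto φ atBot (𝓝 α))
    (hub : ∀ z, φ z ≤ α)
    (hδ : 0 < δ) (hm : 0 < m)
    (hfm : ∀ z : ℝ, φ z ∈ Ioo (α - δ) α → m ≤ f (φ z))
    (hode : ∀ z : ℝ, φ z ∈ Ioo (α - δ) α → HasDerivAt (deriv φ) (-(c * deriv φ z) - f (φ z)) z) :
    ∃ z, φ z = α := by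
  by_contra hno
  push_neg at hno
  have hlt : ∀ z, φ z < α := fun z => lt_of_le_of_ne (hub z) (hno z)
  obtain ⟨Z₀, hZ₀⟩ := (eventually_atBot).1 (hlim.eventually
    (eventually_gt_nhds (by linarith : α - δ < α)))
  have hmem : ∀ z ≤ Z₀, φ z ∈ Ioo (α - δ) α := fun z hz => ⟨hZ₀ z hz, hlt z⟩
  have hdiff : Differentiable ℝ φ := hφ.differentiable one_ne_zero
  have hcd : Continuous (deriv φ) := hφ.continuous_deriv le_rfl
  set ε := m / (8 * (1 + |c|)) with hεdef
  have hεpos : 0 < ε := by positivity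
  have h2cε : 2 * |c| * ε ≤ m / 4 := by
    rw [hεdef]
    have heq : 2 * |c| * (m / (8 * (1 + |c|))) = 2 * |c| * m / (8 * (1 + |c|)) := by ring
    rw [heq, div_le_div_iff₀ (by positivity) (by norm_num : (0:ℝ) < 4)]
    nlinarith [abs_nonneg c, hm.le]
  have hdnp : ∀ z, deriv φ z ≤ 0 := antitone_deriv_nonpos hdiff hanti
  have hval : ∀ z, z ≤ Z₀ → -(2 * ε) ≤ deriv φ z → -(c * deriv φ z) - f (φ z) ≤ -(m / 2) := by
    intro z hz hd2
    have hfz := hfm z (hmem z hz)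
    have h1 : |c * deriv φ z| ≤ 2 * |c| * ε := by
      rw [abs_mul]
      have habs : |deriv φ z| ≤ 2 * ε := by
        rw [abs_le]
        constructor
        · linarith
        · linarith [hdnp z, hεpos]
      nlinarith [abs_nonneg c]
    have h2 := (abs_le.1 h1).1
    linarith [h2cε]
  -- Step A : somewhere the derivative is close to 0
  have hA : ∃ z₁, z₁ ≤ Z₀ ∧ -ε < deriv φ z₁ := by
    by_contra hAn
    push_neg at hAn
    have hmono : AntitoneOn (fun z => φ z + ε * z) (Iic Z₀) := by
      apply antitoneOn_of_deriv_nonpos (convex_Iic Z₀)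
      · exact (hdiff.continuous.continuousOn).add (continuous_const.mul continuous_id).continuousOn
      · intro z hz
        rw [interior_Iic] at hz
        have hlin : HasDerivAt (fun y : ℝ => ε * y) ε z := by
          simpa using (hasDerivAt_id z).const_mul ε
        exact ((hdiff z).hasDerivAt.add hlin).differentiableAt.differentiableWithinAt
      · intro z hz
        rw [interior_Iic] at hz
        have hlin : HasDerivAt (fun y : ℝ => ε * y) ε z := by
          simpa using (hasDerivAt_id z).const_mul ε
        have hD : HasDerivAt (fun z => φ z + ε * z) (deriv φ z + ε) z := (hdiff z).hasDerivAt.add hlin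
        rw [hD.deriv]
        have := hAn z (le_of_lt hz)
        linarith
    set z := Z₀ - (α - φ Z₀ + 1) / ε with hzdef
    have hzle : z ≤ Z₀ := by
      rw [hzdef]
      have h0 : 0 < (α - φ Z₀ + 1) / ε := div_pos (by linarith [hlt Z₀]) hεpos
      linarith
    have h5 := hmono (mem_Iic.2 hzle) (mem_Iic.2 le_rfl) hzle
    simp only at h5
    have hεz : ε * (Z₀ - z) = α - φ Z₀ + 1 := by
      rw [hzdef]
      field_simp; ring
    have hcon2 : α + 1 ≤ φ z := by nlinarith [h5, hεz]
    linarith [hub z]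
  obtain ⟨z₁, hz₁Z₀, hz₁⟩ := hA
  -- Step B : the derivative stays above -2ε to the left of z₁
  have hB : ∀ z, z ≤ z₁ → -(2 * ε) < deriv φ z := by
    by_contra hBn
    push_neg at hBn
    obtain ⟨z₂, hz₂le, hz₂⟩ := hBn
    have hz₂lt : z₂ < z₁ := by
      rcases eq_or_lt_of_le hz₂le with h | h
      · exfalso; rw [h] at hz₂; linarith
      · exact h
    set A := {z | z ∈ Icc z₂ z₁ ∧ deriv φ z ≤ -(2 * ε)} with hAdef
    have hAcl : IsClosed A := by
      have hseteq : A = Icc z₂ z₁ ∩ deriv φ ⁻¹' (Iic (-(2 * ε))) := by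
        ext w
        simp only [hAdef, mem_setOf_eq, mem_inter_iff, mem_preimage, mem_Iic]
      rw [hseteq]
      exact isClosed_Icc.inter (isClosed_Iic.preimage hcd)
    have hAne : A.Nonempty := ⟨z₂, ⟨le_rfl, hz₂lt.le⟩, hz₂⟩
    have hAbdd : BddAbove A := ⟨z₁, fun w hw => hw.1.2⟩
    set zs := sSup A with hzs
    have hzsA : zs ∈ A := hAcl.csSup_mem hAne hAbdd
    have hzslt : zs < z₁ := by
      rcases eq_or_lt_of_le hzsA.1.2 with h | h
      · exfalso
        have := hzsA.2
        rw [h] at this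
        linarith
      · exact h
    have hgt : ∀ w, zs < w → w ≤ z₁ → -(2 * ε) < deriv φ w := by
      intro w h1 h2
      by_contra hle
      push_neg at hle
      have hwA : w ∈ A := ⟨⟨le_trans hzsA.1.1 h1.le, h2⟩, hle⟩
      linarith [le_csSup hAbdd hwA]
    have hzseq : deriv φ zs = -(2 * ε) := by
      have hge : -(2 * ε) ≤ deriv φ zs := by
        have hct : Tendsto (deriv φ) (𝓝[Ioc zs z₁] zs) (𝓝 (deriv φ zs)) :=
          (hcd.continuousAt.tendsto).mono_left nhdsWithin_le_nhds
        have hne2 : (𝓝[Ioc zs z₁] zs).NeBot := by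
          rw [← mem_closure_iff_nhdsWithin_neBot, closure_Ioc (ne_of_lt hzslt)]
          exact ⟨le_rfl, hzslt.le⟩
        apply ge_of_tendsto hct
        filter_upwards [self_mem_nhdsWithin] with w hw
        exact (hgt w hw.1 hw.2).le
      linarith [hzsA.2]
    have hzsZ₀ : zs ≤ Z₀ := le_trans hzsA.1.2 hz₁Z₀
    have hodez := hode zs (hmem zs hzsZ₀)
    have hvz : -(c * deriv φ zs) - f (φ zs) ≤ -(m / 2) :=
      hval zs hzsZ₀ (by rw [hzseq])
    have hslope : Tendsto (slope (deriv φ) zs) (𝓝[>] zs)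
        (𝓝 (-(c * deriv φ zs) - f (φ zs))) :=
      (hasDerivAt_iff_tendsto_slope.1 hodez).mono_left
        (nhdsWithin_mono _ (fun x hx => ne_of_gt hx))
    have hevneg : ∀ᶠ w in 𝓝[>] zs, slope (deriv φ) zs w < 0 :=
      hslope.eventually (eventually_lt_nhds (by linarith : -(c * deriv φ zs) - f (φ zs) < 0))
    have hIocmem : Ioc zs z₁ ∈ 𝓝[>] zs := Ioc_mem_nhdsGT_of_mem ⟨le_rfl, hzslt⟩
    have hne3 : (𝓝[>] zs).NeBot := nhdsGT_neBot zs
    obtain ⟨w, hw1, hw2⟩ := (hevneg.and (eventually_of_mem hIocmem (fun w hw => hw))).exists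
    have hwgt : zs < w := hw2.1
    have hlt2 : deriv φ w < deriv φ zs := by
      rw [slope_def_field] at hw1
      have hpos : (0:ℝ) < w - zs := by linarith
      have := (div_lt_iff₀ hpos).1 hw1
      linarith
    rw [hzseq] at hlt2
    linarith [hgt w hwgt hw2.2]
  -- Step C : then the derivative blows up linearly to the left, contradiction
  have hmono2 : AntitoneOn (fun z => deriv φ z + m / 2 * z) (Iic z₁) := by
    apply antitoneOn_of_deriv_nonpos (convex_Iic z₁)
    · exact (hcd.continuousOn).add (continuous_const.mul continuous_id).continuousOn
    · intro z hz
      rw [interior_Iic] at hz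
      have hlin : HasDerivAt (fun y : ℝ => m / 2 * y) (m / 2) z := by
        simpa using (hasDerivAt_id z).const_mul (m / 2)
      exact ((hode z (hmem z (le_trans hz.le hz₁Z₀))).add hlin).differentiableAt.differentiableWithinAt
    · intro z hz
      rw [interior_Iic] at hz
      have hlin : HasDerivAt (fun y : ℝ => m / 2 * y) (m / 2) z := by
        simpa using (hasDerivAt_id z).const_mul (m / 2)
      have hD : HasDerivAt (fun z => deriv φ z + m / 2 * z) (-(c * deriv φ z) - f (φ z) + m / 2) z := (hode z (hmem z (le_trans hz.le hz₁Z₀))).add hlin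
      rw [hD.deriv]
      have := hval z (le_trans hz.le hz₁Z₀) (le_of_lt (hB z hz.le))
      linarith
  set w := z₁ - 2 / m * (1 - deriv φ z₁) with hwdef
  have hwle : w ≤ z₁ := by
    rw [hwdef]
    have h6 : 0 ≤ 2 / m * (1 - deriv φ z₁) := by
      apply mul_nonneg (by positivity)
      linarith [hdnp z₁]
    linarith
  have h7 := hmono2 (mem_Iic.2 hwle) (mem_Iic.2 le_rfl) hwle
  simp only at h7
  have hcomp : m / 2 * (z₁ - w) = 1 - deriv φ z₁ := by
    rw [hwdef]
    field_simp
    ring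
  have h8 : 1 ≤ deriv φ w := by nlinarith [h7, hcomp]
  linarith [hdnp w]


lemma attain_bot {f : ℝ → ℝ} {φ : ℝ → ℝ} {β c δ m : ℝ}
    (hφ : ContDiff ℝ 1 φ) (hanti : Antitone φ)
    (hlim : Tendsto φ atTop (𝓝 β))
    (hlb : ∀ z, β ≤ φ z)
    (hδ : 0 < δ) (hm : 0 < m)
    (hfm : ∀ z : ℝ, φ z ∈ Ioo β (β + δ) → f (φ z) ≤ -m)
    (hode : ∀ z : ℝ, φ z ∈ Ioo β (β + δ) → HasDerivAt (deriv φ) (-(c * deriv φ z) - f (φ z)) z) :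
    ∃ z, φ z = β := by
  have hdiff : Differentiable ℝ φ := hφ.differentiable one_ne_zero
  set ψ := fun z => -φ (-z) with hψ
  have hψd : ∀ z, HasDerivAt ψ (deriv φ (-z)) z := by
    intro z
    have h1 : HasDerivAt (fun y => φ (-y)) (deriv φ (-z) * (-1)) z :=
      ((hdiff (-z)).hasDerivAt).comp z (hasDerivAt_neg z)
    have h2 := h1.neg
    exact h2.congr_deriv (by ring)
  have hψderiv : deriv ψ = fun z => deriv φ (-z) := funext fun z => (hψd z).deriv
  have hψC : ContDiff ℝ 1 ψ := (hφ.comp (contDiff_id.neg)).neg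
  have hantiψ : Antitone ψ := by
    intro a b hab
    have : φ (-b) ≥ φ (-a) := hanti (by linarith)
    simp only [hψ]
    linarith
  have hlimψ : Tendsto ψ atBot (𝓝 (-β)) := by
    have h1 : Tendsto (fun z : ℝ => -z) atBot atTop := tendsto_neg_atBot_atTop
    exact (hlim.comp h1).neg
  have hubψ : ∀ z, ψ z ≤ -β := fun z => by
    simp only [hψ]
    linarith [hlb (-z)]
  have hmemψ : ∀ z, ψ z ∈ Ioo (-β - δ) (-β) → φ (-z) ∈ Ioo β (β + δ) := by
    intro z hz
    simp only [hψ, mem_Ioo] at hz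
    exact ⟨by linarith [hz.2], by linarith [hz.1]⟩
  have hfmψ : ∀ z : ℝ, ψ z ∈ Ioo (-β - δ) (-β) → m ≤ (fun u => -f (-u)) (ψ z) := by
    intro z hz
    have := hfm (-z) (hmemψ z hz)
    have hneg : -(ψ z) = φ (-z) := by simp [hψ]
    show m ≤ -f (-(ψ z))
    rw [hneg]
    linarith
  have hodeψ : ∀ z : ℝ, ψ z ∈ Ioo (-β - δ) (-β) →
      HasDerivAt (deriv ψ) (-((-c) * deriv ψ z) - (fun u => -f (-u)) (ψ z)) z := by
    intro z hz
    have h0 := hode (-z) (hmemψ z hz)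
    have h1 : HasDerivAt (fun y => deriv φ (-y))
        ((-(c * deriv φ (-z)) - f (φ (-z))) * (-1)) z := h0.comp z (hasDerivAt_neg z)
    rw [hψderiv]
    convert h1 using 1
    have hneg : -(ψ z) = φ (-z) := by simp [hψ]
    show -((-c) * deriv φ (-z)) - (-f (-(ψ z))) = _
    rw [hneg]
    ring
  obtain ⟨z, hz⟩ := attain_top (f := fun u => -f (-u)) (α := -β) (c := -c) (δ := δ) (m := m)
    hψC hantiψ hlimψ hubψ hδ hm hfmψ hodeψ
  refine ⟨-z, ?_⟩
  simp only [hψ] at hz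
  linarith [hz]


/-! ### From a front profile to a trajectory -/

structure FrontPack (f : ℝ → ℝ) (S : Set ℝ) (c α β : ℝ) (φ : ℝ → ℝ) where
  z₀ : ℝ
  z₁ : ℝ
  Z : ℝ → ℝ
  q : ℝ → ℝ
  hz : z₀ < z₁
  flat_l : ∀ z, z ≤ z₀ → φ z = α
  flat_r : ∀ z, z₁ ≤ z → φ z = β
  mem : ∀ z ∈ Ioo z₀ z₁, φ z ∈ Ioo β α
  inv1 : ∀ p ∈ Icc β α, φ (Z p) = p
  inv2 : ∀ z ∈ Icc z₀ z₁, Z (φ z) = z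
  Zmem : ∀ p ∈ Icc β α, Z p ∈ Icc z₀ z₁
  Ztop : Z α = z₀
  Zbot : Z β = z₁
  Zcont : ContinuousOn Z (Icc β α)
  Zder : ∀ p ∈ Ioo β α, HasDerivAt Z (1 / q p) p
  qdef : ∀ p, q p = deriv φ (Z p)
  td : TD f S c α β q

lemma buildFront {f : ℝ → ℝ} {S : Set ℝ} {c α β : ℝ} {φ : ℝ → ℝ}
    (hTW1 : ContDiff ℝ 1 φ)
    (hTW2 : ∀ z, φ z ∉ S → HasDerivAt (deriv φ) (-(c * deriv φ z) - f (φ z)) z)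
    (hanti : Antitone φ) (hlt : Tendsto φ atBot (𝓝 α)) (hrt : Tendsto φ atTop (𝓝 β))
    (hOC : OrdConnected {z : ℝ | deriv φ z ≠ 0})
    (hαβ : β < α)
    (hJT : JumpTop f S α) (hJB : JumpBot f S β) :
    Nonempty (FrontPack f S c α β φ) := by
  classical
  have hdiff : Differentiable ℝ φ := hTW1.differentiable one_ne_zero
  have hcont : Continuous φ := hdiff.continuous
  have hub : ∀ z, φ z ≤ α := fun z =>
    ge_of_tendsto hlt ((eventually_atBot).2 ⟨z, fun w hw => hanti hw⟩)
  have hlb : ∀ z, β ≤ φ z := fun z =>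
    le_of_tendsto hrt ((eventually_atTop).2 ⟨z, fun w hw => hanti hw⟩)
  -- attainment of endpoints
  obtain ⟨δT, mT, MT, hδT, hmT, _, hfT, hfreeT⟩ := hJT
  have hw₀ : ∃ z, φ z = α := by
    apply attain_top hTW1 hanti hlt hub hδT hmT
    · exact fun z hz => (hfT _ hz).1
    · intro z hz
      apply hTW2 z
      intro hzS
      rw [Set.eq_empty_iff_forall_notMem] at hfreeT
      exact hfreeT _ ⟨hz, hzS⟩
  obtain ⟨δB, mB, MB, hδB, hmB, _, hfB, hfreeB⟩ := hJB
  have hw₁ : ∃ z, φ z = β := by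
    apply attain_bot hTW1 hanti hrt hlb hδB hmB
    · exact fun z hz => (hfB _ hz).2
    · intro z hz
      apply hTW2 z
      intro hzS
      rw [Set.eq_empty_iff_forall_notMem] at hfreeB
      exact hfreeB _ ⟨hz, hzS⟩
  obtain ⟨w₀, hw₀⟩ := hw₀
  obtain ⟨w₁, hw₁⟩ := hw₁
  set z₀ := sSup (φ ⁻¹' {α}) with hz₀def
  set z₁ := sInf (φ ⁻¹' {β}) with hz₁def
  have hAα_ne : (φ ⁻¹' {α}).Nonempty := ⟨w₀, hw₀⟩
  have hAβ_ne : (φ ⁻¹' {β}).Nonempty := ⟨w₁, hw₁⟩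
  have hAα_cl : IsClosed (φ ⁻¹' {α}) := isClosed_singleton.preimage hcont
  have hAβ_cl : IsClosed (φ ⁻¹' {β}) := isClosed_singleton.preimage hcont
  have hAα_bdd : BddAbove (φ ⁻¹' {α}) := by
    refine ⟨w₁, fun z hz => ?_⟩
    by_contra hgt
    push_neg at hgt
    have h1 : φ z ≤ φ w₁ := hanti hgt.le
    rw [mem_preimage, mem_singleton_iff] at hz
    rw [hz, hw₁] at h1
    linarith
  have hAβ_bdd : BddBelow (φ ⁻¹' {β}) := by
    refine ⟨w₀, fun z hz => ?_⟩
    by_contra hgt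
    push_neg at hgt
    have h1 : φ w₀ ≤ φ z := hanti hgt.le
    rw [mem_preimage, mem_singleton_iff] at hz
    rw [hz, hw₀] at h1
    linarith
  have hz₀mem : φ z₀ = α := hAα_cl.csSup_mem hAα_ne hAα_bdd
  have hz₁mem : φ z₁ = β := hAβ_cl.csInf_mem hAβ_ne hAβ_bdd
  have hz01 : z₀ < z₁ := by
    rcases le_or_gt z₁ z₀ with h | h
    · exfalso
      have := hanti h
      rw [hz₀mem, hz₁mem] at this
      linarith
    · exact h
  have flat_l : ∀ z, z ≤ z₀ → φ z = α := by
    intro z hz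
    have h1 : φ z₀ ≤ φ z := hanti hz
    rw [hz₀mem] at h1
    exact le_antisymm (hub z) h1
  have flat_r : ∀ z, z₁ ≤ z → φ z = β := by
    intro z hz
    have h1 : φ z ≤ φ z₁ := hanti hz
    rw [hz₁mem] at h1
    exact le_antisymm h1 (hlb z)
  have hless : ∀ z, z₀ < z → φ z < α := by
    intro z hz
    rcases lt_or_eq_of_le (hub z) with h | h
    · exact h
    · exfalso
      have : z ∈ φ ⁻¹' {α} := by rw [mem_preimage, mem_singleton_iff]; exact h
      exact absurd (le_csSup hAα_bdd this) (not_le.2 hz)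
  have hmore : ∀ z, z < z₁ → β < φ z := by
    intro z hz
    rcases lt_or_eq_of_le (hlb z) with h | h
    · exact h
    · exfalso
      have : z ∈ φ ⁻¹' {β} := by rw [mem_preimage, mem_singleton_iff]; exact h.symm
      exact absurd (csInf_le hAβ_bdd this) (not_le.2 hz)
  have memIoo : ∀ z ∈ Ioo z₀ z₁, φ z ∈ Ioo β α := fun z hz => ⟨hmore z hz.2, hless z hz.1⟩
  have hderiv_nonpos := antitone_deriv_nonpos hdiff hanti
  have hdneg : ∀ z ∈ Ioo z₀ z₁, deriv φ z < 0 := by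
    intro z hz
    have h1 : ∃ ζ ∈ Ioo z₀ z, deriv φ ζ ≠ 0 := by
      obtain ⟨ζ, hζ, hζeq⟩ := exists_hasDerivAt_eq_slope φ (deriv φ) hz.1
        (hcont.continuousOn) (fun x _ => (hdiff x).hasDerivAt)
      refine ⟨ζ, hζ, ?_⟩
      rw [hζeq]
      have h2 : φ z < α := hless z hz.1
      apply ne_of_lt
      apply div_neg_of_neg_of_pos
      · rw [hz₀mem]; linarith
      · linarith [hz.1]
    have h2 : ∃ ζ ∈ Ioo z z₁, deriv φ ζ ≠ 0 := by
      obtain ⟨ζ, hζ, hζeq⟩ := exists_hasDerivAt_eq_slope φ (deriv φ) hz.2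
        (hcont.continuousOn) (fun x _ => (hdiff x).hasDerivAt)
      refine ⟨ζ, hζ, ?_⟩
      rw [hζeq]
      have h3 : β < φ z := hmore z hz.2
      apply ne_of_lt
      apply div_neg_of_neg_of_pos
      · rw [hz₁mem]; linarith
      · linarith [hz.2]
    obtain ⟨ζ₁, hζ₁, hne1⟩ := h1
    obtain ⟨ζ₂, hζ₂, hne2⟩ := h2
    have hmem2 : z ∈ Icc ζ₁ ζ₂ := ⟨hζ₁.2.le, hζ₂.1.le⟩
    have hne := hOC.out hne1 hne2 hmem2
    exact lt_of_le_of_ne (hderiv_nonpos z) hne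
  have hstrict : StrictAntiOn φ (Icc z₀ z₁) := by
    apply strictAntiOn_of_deriv_neg (convex_Icc _ _) hcont.continuousOn
    intro z hz
    rw [interior_Icc] at hz
    exact hdneg z hz
  have hinj : InjOn φ (Icc z₀ z₁) := hstrict.injOn
  -- the inverse function
  set Zfun : ℝ → ℝ := fun p => if p ≤ β then z₁ else if α ≤ p then z₀ else sInf {z | φ z ≤ p}
    with hZfun
  have hZopen : ∀ p ∈ Ioo β α, Zfun p ∈ Ioo z₀ z₁ ∧ φ (Zfun p) = p := by
    intro p hp
    have hne' : {z | φ z ≤ p}.Nonempty := ⟨z₁, by rw [mem_setOf_eq, hz₁mem]; linarith [hp.1]⟩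
    have hbdd : BddBelow {z | φ z ≤ p} := by
      refine ⟨z₀, fun z hz => ?_⟩
      by_contra hlt2
      push_neg at hlt2
      have h1 : φ z = α := flat_l z hlt2.le
      rw [mem_setOf_eq, h1] at hz
      linarith [hp.2]
    have hcl : IsClosed {z | φ z ≤ p} := isClosed_le hcont continuous_const
    have hval : Zfun p = sInf {z | φ z ≤ p} := by
      rw [hZfun]
      simp only
      rw [if_neg (by linarith [hp.1]), if_neg (by linarith [hp.2])]
    have hinf_mem : sInf {z | φ z ≤ p} ∈ {z | φ z ≤ p} := hcl.csInf_mem hne' hbdd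
    have hge : ∀ z, z < sInf {z | φ z ≤ p} → p < φ z := by
      intro z hz
      by_contra hle2
      push_neg at hle2
      exact absurd (csInf_le hbdd hle2) (not_le.2 hz)
    have hφZ : φ (sInf {z | φ z ≤ p}) = p := by
      apply le_antisymm hinf_mem
      have hct : Tendsto φ (𝓝[<] (sInf {z | φ z ≤ p})) (𝓝 (φ (sInf {z | φ z ≤ p}))) :=
        (hcont.continuousAt.tendsto).mono_left nhdsWithin_le_nhds
      apply ge_of_tendsto hct
      filter_upwards [self_mem_nhdsWithin] with w hw
      exact (hge w hw).le
    refine ⟨⟨?_, ?_⟩, by rw [hval]; exact hφZ⟩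
    · rw [hval]
      by_contra hle3
      push_neg at hle3
      have h4 := flat_l _ hle3
      rw [h4] at hφZ
      linarith [hp.2]
    · rw [hval]
      have hz₁in : z₁ ∈ {z | φ z ≤ p} := by rw [mem_setOf_eq, hz₁mem]; linarith [hp.1]
      rcases lt_or_eq_of_le (csInf_le hbdd hz₁in) with h | h
      · exact h
      · exfalso
        rw [h, hz₁mem] at hφZ
        linarith [hp.1]
  have hZtop : Zfun α = z₀ := by
    rw [hZfun]
    simp only
    rw [if_neg (by linarith), if_pos le_rfl]
  have hZbot : Zfun β = z₁ := by
    rw [hZfun]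
    simp only
    rw [if_pos le_rfl]
  have hinv1 : ∀ p ∈ Icc β α, φ (Zfun p) = p := by
    intro p hp
    rcases eq_or_lt_of_le hp.1 with h | h
    · rw [← h, hZbot, hz₁mem]
    rcases eq_or_lt_of_le hp.2 with h2 | h2
    · rw [h2, hZtop, hz₀mem]
    · exact (hZopen p ⟨h, h2⟩).2
  have hZmem : ∀ p ∈ Icc β α, Zfun p ∈ Icc z₀ z₁ := by
    intro p hp
    rcases eq_or_lt_of_le hp.1 with h | h
    · rw [← h, hZbot]; exact ⟨hz01.le, le_rfl⟩
    rcases eq_or_lt_of_le hp.2 with h2 | h2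
    · rw [h2, hZtop]; exact ⟨le_rfl, hz01.le⟩
    · exact Ioo_subset_Icc_self (hZopen p ⟨h, h2⟩).1
  have hinv2 : ∀ z ∈ Icc z₀ z₁, Zfun (φ z) = z := by
    intro z hz
    have hpz : φ z ∈ Icc β α := ⟨hlb z, hub z⟩
    exact hinj (hZmem _ hpz) hz (hinv1 _ hpz)
  -- continuity of the inverse
  have hmemφ : ∀ z : Icc z₀ z₁, φ z ∈ Icc β α := fun z => ⟨hlb _, hub _⟩
  set e : (Icc z₀ z₁) ≃ (Icc β α) :=
    { toFun := fun z => ⟨φ z, hmemφ z⟩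
      invFun := fun p => ⟨Zfun p, hZmem p p.2⟩
      left_inv := fun z => Subtype.ext (hinv2 z z.2)
      right_inv := fun p => Subtype.ext (hinv1 p p.2) } with he
  have hecont : Continuous e := Continuous.subtype_mk (hcont.comp continuous_subtype_val) _
  haveI : CompactSpace (Icc z₀ z₁) := isCompact_iff_compactSpace.mp isCompact_Icc
  set ehomeo := Continuous.homeoOfEquivCompactToT2 (f := e) hecont with heh
  have hZcont : ContinuousOn Zfun (Icc β α) := by
    rw [continuousOn_iff_continuous_restrict]
    have hres : (Icc β α).restrict Zfun = Subtype.val ∘ ehomeo.symm := rfl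
    rw [show (Icc β α).domRestrict Zfun = Subtype.val ∘ ehomeo.symm from hres]
    exact continuous_subtype_val.comp ehomeo.symm.continuous
  set q : ℝ → ℝ := fun p => deriv φ (Zfun p) with hq
  have hZder : ∀ p ∈ Ioo β α, HasDerivAt Zfun (1 / q p) p := by
    intro p hp
    have hzo := hZopen p hp
    have hcontZ : ContinuousAt Zfun p := hZcont.continuousAt (Icc_mem_nhds hp.1 hp.2)
    have hder := (hdiff (Zfun p)).hasDerivAt
    have hne0 : deriv φ (Zfun p) ≠ 0 := ne_of_lt (hdneg _ hzo.1)
    have hfg : ∀ᶠ y in 𝓝 p, φ (Zfun y) = y := by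
      filter_upwards [isOpen_Ioo.mem_nhds hp] with y hy
      exact hinv1 y (Ioo_subset_Icc_self hy)
    have := HasDerivAt.of_local_left_inverse hcontZ hder hne0 hfg
    simpa [hq, one_div] using this
  -- derivative vanishes at the junctions
  have hd0 : deriv φ z₀ = 0 := by
    have hts : Tendsto (slope φ z₀) (𝓝[<] z₀) (𝓝 (deriv φ z₀)) :=
      (hasDerivAt_iff_tendsto_slope.1 (hdiff z₀).hasDerivAt).mono_left
        (nhdsWithin_mono _ fun x hx => ne_of_lt hx)
    have hev : slope φ z₀ =ᶠ[𝓝[<] z₀] (fun _ => (0:ℝ)) := by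
      filter_upwards [self_mem_nhdsWithin] with w hw
      rw [slope_def_field, flat_l w (le_of_lt hw), hz₀mem]
      simp
    exact tendsto_nhds_unique (hts.congr' hev) tendsto_const_nhds
  have hd1 : deriv φ z₁ = 0 := by
    have hts : Tendsto (slope φ z₁) (𝓝[>] z₁) (𝓝 (deriv φ z₁)) :=
      (hasDerivAt_iff_tendsto_slope.1 (hdiff z₁).hasDerivAt).mono_left
        (nhdsWithin_mono _ fun x hx => ne_of_gt hx)
    have hev : slope φ z₁ =ᶠ[𝓝[>] z₁] (fun _ => (0:ℝ)) := by
      filter_upwards [self_mem_nhdsWithin] with w hw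
      rw [slope_def_field, flat_r w (le_of_lt hw), hz₁mem]
      simp
    exact tendsto_nhds_unique (hts.congr' hev) tendsto_const_nhds
  have htd : TD f S c α β q := by
    constructor
    · exact hαβ
    · exact (hTW1.continuous_deriv le_rfl).comp_continuousOn hZcont
    · show deriv φ (Zfun α) = 0
      rw [hZtop]; exact hd0
    · show deriv φ (Zfun β) = 0
      rw [hZbot]; exact hd1
    · exact fun p hp => hdneg _ (hZopen p hp).1
    · intro p hp hpS
      have hzo := hZopen p hp
      have hφ'' := hTW2 (Zfun p) (by rw [hzo.2]; exact hpS)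
      have hcomp := hφ''.comp p (hZder p hp)
      have hne0 : q p ≠ 0 := ne_of_lt (hdneg _ hzo.1)
      have hvaleq : (-(c * deriv φ (Zfun p)) - f (φ (Zfun p))) * (1 / q p)
          = -c - f p / q p := by
        rw [hzo.2]
        have hqp : deriv φ (Zfun p) = q p := rfl
        rw [hqp]
        field_simp
      have hfinal : HasDerivAt q ((-(c * deriv φ (Zfun p)) - f (φ (Zfun p))) * (1 / q p)) p :=
        hcomp
      rw [hvaleq] at hfinal
      exact hfinal
  exact ⟨⟨z₀, z₁, Zfun, q, hz01, flat_l, flat_r, memIoo, hinv1, hinv2, hZmem, hZtop, hZbot,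
    hZcont, hZder, fun p => rfl, htd⟩⟩


/-! ### Profiles with equal trajectories are shifts of each other -/

lemma shift_of_eq_traj {f : ℝ → ℝ} {S : Set ℝ} {c c2 α β α2 β2 : ℝ} {φ ψ : ℝ → ℝ}
    (P : FrontPack f S c α β φ) (Q : FrontPack f S c2 α2 β2 ψ)
    (hα2 : α2 = α) (hβ2 : β2 = β)
    (hq : ∀ p ∈ Icc β α, P.q p = Q.q p) :
    ∃ Z : ℝ, ∀ z, φ z = ψ (z + Z) := by
  have hα' : α = α2 := hα2.symm
  have hβ' : β = β2 := hβ2.symm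
  subst hα'
  subst hβ'
  have hβα : β < α := P.td.hlt
  have hg : ∀ p ∈ Ioo β α, HasDerivAt (fun x => P.Z x - Q.Z x) 0 p := by
    intro p hp
    have h1 := P.Zder p hp
    have h2 := Q.Zder p hp
    have h3 := h1.sub h2
    have h4 : 1 / P.q p - 1 / Q.q p = 0 := by rw [hq p (Ioo_subset_Icc_self hp)]; ring
    rwa [h4] at h3
  have haux : ∀ a ∈ Ioo β α, ∀ b ∈ Ioo β α, a ≤ b →
      P.Z a - Q.Z a = P.Z b - Q.Z b := by
    intro a ha b hb hab
    rcases eq_or_lt_of_le hab with h | h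
    · rw [h]
    · obtain ⟨ζ, hζ, hζeq⟩ := exists_hasDerivAt_eq_slope (fun x => P.Z x - Q.Z x)
        (fun _ => (0:ℝ)) h
        (fun x hx => (hg x ⟨lt_of_lt_of_le ha.1 hx.1, lt_of_le_of_lt hx.2 hb.2⟩)
          |>.differentiableAt.continuousAt.continuousWithinAt)
        (fun x hx => hg x ⟨lt_trans ha.1 hx.1, lt_trans hx.2 hb.2⟩)
      have := hζeq.symm
      rw [div_eq_iff (by linarith : b - a ≠ 0)] at this
      simp only [zero_mul] at this
      linarith [sub_eq_zero.1 this]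
  have hconst : ∀ p ∈ Ioo β α, ∀ p' ∈ Ioo β α, P.Z p - Q.Z p = P.Z p' - Q.Z p' := by
    intro p hp p' hp'
    rcases le_total p p' with h | h
    · exact haux p hp p' hp' h
    · exact (haux p' hp' p hp h).symm
  have hneα : (𝓝[Ioo β α] α).NeBot := by
    rw [← mem_closure_iff_nhdsWithin_neBot, closure_Ioo (ne_of_lt hβα)]
    exact ⟨hβα.le, le_rfl⟩
  have hneβ : (𝓝[Ioo β α] β).NeBot := nhds_right_neBot hβα
  have hlimP : ∀ (x : ℝ), x ∈ Icc β α → Tendsto (fun y => P.Z y - Q.Z y) (𝓝[Ioo β α] x)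
      (𝓝 (P.Z x - Q.Z x)) := by
    intro x hx
    have h1 := (P.Zcont x hx).tendsto.mono_left (nhdsWithin_mono _ Ioo_subset_Icc_self)
    have h2 := (Q.Zcont x hx).tendsto.mono_left (nhdsWithin_mono _ Ioo_subset_Icc_self)
    exact h1.sub h2
  have hIoo : ∀ p ∈ Ioo β α, P.Z p - Q.Z p = P.z₀ - Q.z₀ := by
    intro p hp
    have ht := hlimP α (right_mem_Icc.2 hβα.le)
    rw [P.Ztop, Q.Ztop] at ht
    have hconst2 : Tendsto (fun x => P.Z x - Q.Z x) (𝓝[Ioo β α] α) (𝓝 (P.Z p - Q.Z p)) := by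
      apply Tendsto.congr' ?_ tendsto_const_nhds
      filter_upwards [self_mem_nhdsWithin] with x hx
      exact hconst p hp x hx
    exact tendsto_nhds_unique hconst2 ht
  have hz₁rel : P.z₁ - Q.z₁ = P.z₀ - Q.z₀ := by
    have ht := hlimP β (left_mem_Icc.2 hβα.le)
    rw [P.Zbot, Q.Zbot] at ht
    -- pick a point of Ioo to evaluate the constant
    set p := (β + α) / 2 with hpdef
    have hpI : p ∈ Ioo β α := ⟨by rw [hpdef]; linarith, by rw [hpdef]; linarith⟩
    have hconst2 : Tendsto (fun x => P.Z x - Q.Z x) (𝓝[Ioo β α] β) (𝓝 (P.Z p - Q.Z p)) := by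
      apply Tendsto.congr' ?_ tendsto_const_nhds
      filter_upwards [self_mem_nhdsWithin] with x hx
      exact hconst p hpI x hx
    have h5 := tendsto_nhds_unique hconst2 ht
    rw [← h5]
    exact hIoo p hpI
  refine ⟨Q.z₀ - P.z₀, ?_⟩
  intro z
  rcases le_or_gt z P.z₀ with h | h
  · rw [P.flat_l z h, Q.flat_l _ (by linarith : z + (Q.z₀ - P.z₀) ≤ Q.z₀)]
  rcases le_or_gt P.z₁ z with h2 | h2
  · rw [P.flat_r z h2, Q.flat_r _ (by linarith [hz₁rel] : Q.z₁ ≤ z + (Q.z₀ - P.z₀))]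
  · have hpI : φ z ∈ Ioo β α := P.mem z ⟨h, h2⟩
    have hzeq : P.Z (φ z) = z := P.inv2 z ⟨h.le, h2.le⟩
    have hrel := hIoo (φ z) hpI
    have heq2 : z + (Q.z₀ - P.z₀) = Q.Z (φ z) := by linarith [hrel, hzeq]
    rw [heq2, Q.inv1 (φ z) (Ioo_subset_Icc_self hpI)]


/-! ### Platform index lemmas -/

lemma plat_strictAnti {J : ℕ} {plat : ℕ → ℝ} (hdec : ∀ j < J, plat (j+1) < plat j) :
    ∀ i j : ℕ, i < j → j ≤ J → plat j < plat i := by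
  intro i j
  induction j with
  | zero => intro h _; omega
  | succ k ih =>
    intro hij hkJ
    have hk : plat (k+1) < plat k := hdec k (by omega)
    rcases Nat.lt_or_ge i k with h | h
    · exact lt_trans hk (ih h (by omega))
    · have hik : i = k := by omega
      rw [hik]
      exact hk

lemma plat_anti {J : ℕ} {plat : ℕ → ℝ} (hdec : ∀ j < J, plat (j+1) < plat j) :
    ∀ i j : ℕ, i ≤ j → j ≤ J → plat j ≤ plat i := by
  intro i j hij hjJ
  rcases eq_or_lt_of_le hij with h | h
  · rw [h]
  · exact (plat_strictAnti hdec i j h hjJ).le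

lemma plat_nonneg {J : ℕ} {plat : ℕ → ℝ} (hdec : ∀ j < J, plat (j+1) < plat j)
    (hJ0 : plat J = 0) : ∀ j ≤ J, 0 ≤ plat j := by
  intro j hj
  rw [← hJ0]
  exact plat_anti hdec j J hj le_rfl

lemma c_mono {J : ℕ} {c : ℕ → ℝ} (hc : ∀ j, j + 1 < J → c j ≤ c (j+1)) :
    ∀ i j : ℕ, i ≤ j → j < J → c i ≤ c j := by
  intro i j
  induction j with
  | zero =>
    intro h _
    have h0 : i = 0 := by omega
    rw [h0]
  | succ k ih =>
    intro hij hkJ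
    rcases Nat.lt_or_ge i (k+1) with h | h
    · have h1 : c i ≤ c k := ih (by omega) (by omega)
      exact le_trans h1 (hc k hkJ)
    · have h2 : i = k+1 := by omega
      rw [h2]

/-! ### Stable points : finiteness and jumps -/

lemma stable_finite (I : ℕ) (θ : ℕ → ℝ) : (StablePts I θ).Finite := by
  have hsub : StablePts I θ ⊆ (fun i => θ (2 * i)) '' (Iic I) := by
    rintro x ⟨i, hi, hx⟩
    exact ⟨i, hi, hx.symm⟩
  exact ((Set.finite_Iic I).image _).subset hsub

lemma stable_jumps {f : ℝ → ℝ} {I : ℕ} {θ : ℕ → ℝ} (hH3 : H3 f I θ) {s : ℝ}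
    (hs : s ∈ StablePts I θ) :
    JumpTop f (StablePts I θ) s ∧ JumpBot f (StablePts I θ) s := by
  classical
  obtain ⟨i, hi, hsθ⟩ := hs
  obtain ⟨Lm, Lp, hLm, hLp, hTm, hTp⟩ := hH3 i hi
  rw [← hsθ] at hTm hTp
  have hSfin := stable_finite I θ
  have hfree : ∃ δS > 0, ∀ x ∈ StablePts I θ, x ≠ s → δS ≤ |x - s| := by
    set T := (StablePts I θ \ {s}) with hT
    have hTfin : T.Finite := hSfin.diff
    rcases T.eq_empty_or_nonempty with h | h
    · refine ⟨1, by norm_num, fun x hx hne => ?_⟩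
      exact absurd (show x ∈ T from ⟨hx, hne⟩) (by rw [h]; simp)
    · obtain ⟨x₀, hx₀T, hx₀min⟩ := T.exists_min_image (fun x => |x - s|) hTfin h
      refine ⟨|x₀ - s|, abs_pos.2 (sub_ne_zero.2 hx₀T.2), fun x hx hne => hx₀min x ⟨hx, hne⟩⟩
  obtain ⟨δS, hδS, hδSsep⟩ := hfree
  constructor
  · have hev := hTm (Ioo_mem_nhds (show Lm / 2 < Lm by linarith) (show Lm < 2 * Lm by linarith))
    rw [mem_map, mem_nhdsLT_iff_exists_Ioo_subset] at hev
    obtain ⟨l, hl, hsub⟩ := hev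
    rw [mem_Iio] at hl
    refine ⟨min (s - l) δS, Lm / 2, 2 * Lm, lt_min (by linarith) hδS, by linarith, by linarith,
      ?_, ?_⟩
    · intro u hu
      have humem : u ∈ Ioo l s := ⟨by linarith [hu.1, min_le_left (s - l) δS], hu.2⟩
      have := hsub humem
      rw [mem_preimage, mem_Ioo] at this
      exact ⟨this.1.le, this.2.le⟩
    · rw [Set.eq_empty_iff_forall_notMem]
      rintro x ⟨hx1, hx2⟩
      have hne : x ≠ s := ne_of_lt hx1.2
      have hsep := hδSsep x hx2 hne
      have habs : |x - s| = s - x := by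
        rw [abs_of_neg (by linarith [hx1.2] : x - s < 0)]
        ring
      rw [habs] at hsep
      have := min_le_right (s - l) δS
      linarith [hx1.1]
  · have hev := hTp (Ioo_mem_nhds (show 2 * Lp < Lp by linarith) (show Lp < Lp / 2 by linarith))
    rw [mem_map, mem_nhdsGT_iff_exists_Ioo_subset] at hev
    obtain ⟨r, hr, hsub⟩ := hev
    rw [mem_Ioi] at hr
    refine ⟨min (r - s) δS, -Lp / 2, -(2 * Lp), lt_min (by linarith) hδS, by linarith, by linarith,
      ?_, ?_⟩
    · intro u hu
      have humem : u ∈ Ioo s r := ⟨hu.1, by linarith [hu.2, min_le_left (r - s) δS]⟩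
      have := hsub humem
      rw [mem_preimage, mem_Ioo] at this
      constructor
      · show -(-(2 * Lp)) ≤ f u
        linarith [this.1]
      · show f u ≤ -(-Lp / 2)
        linarith [this.2]
    · rw [Set.eq_empty_iff_forall_notMem]
      rintro x ⟨hx1, hx2⟩
      have hne : x ≠ s := ne_of_gt hx1.1
      have hsep := hδSsep x hx2 hne
      have habs : |x - s| = x - s := abs_of_pos (by linarith [hx1.1])
      rw [habs] at hsep
      have := min_le_right (r - s) δS
      linarith [hx1.2]

/-! ### The core discrepancy argument -/

lemma core {f : ℝ → ℝ} {S : Set ℝ} (hS : S.Finite)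
    (jumps : ∀ s ∈ S, JumpTop f S s ∧ JumpBot f S s)
    {J J' : ℕ} {φF φF' : ℕ → ℝ → ℝ} {c c' : ℕ → ℝ} {plat plat' : ℕ → ℝ}
    (hplat0 : plat 0 = 1)
    (hplatJ : plat J = 0) (hdec : ∀ j < J, plat (j+1) < plat j)
    (hstb : ∀ j ≤ J, plat j ∈ S) (hcm : ∀ j, j + 1 < J → c j ≤ c (j+1))
    (packs : ∀ j, j < J → FrontPack f S (c j) (plat j) (plat (j+1)) (φF j))
    (hplatJ' : plat' J' = 0) (hdec' : ∀ k < J', plat' (k+1) < plat' k)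
    (hstb' : ∀ k ≤ J', plat' k ∈ S)
    (packs' : ∀ k, k < J' → FrontPack f S (c' k) (plat' k) (plat' (k+1)) (φF' k))
    {b : ℝ}
    (hbP : ∃ j, j + 1 ≤ J ∧ plat (j+1) = b)
    (hbP' : ∀ k ≤ J', plat' k ≠ b)
    (habove : ∀ x, b < x → ((∃ j ≤ J, plat j = x) ∨ (∃ k ≤ J', plat' k = x)) →
        ((∃ j ≤ J, plat j = x) ∧ (∃ k ≤ J', plat' k = x))) : False := by
  obtain ⟨j, hj1, hjb⟩ := hbP
  have hbne0 : b ≠ 0 := by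
    intro h
    exact hbP' J' le_rfl (by rw [hplatJ', h])
  have hj1J : j + 1 < J := by
    rcases eq_or_lt_of_le hj1 with h | h
    · exfalso
      apply hbne0
      rw [← hjb, h, hplatJ]
    · exact h
  have hbpos : 0 ≤ b := by
    rw [← hjb]
    exact plat_nonneg hdec hplatJ (j+1) hj1
  have hbplatj : b < plat j := by
    rw [← hjb]
    exact hdec j (by omega)
  -- plat j is a platform of the second terrace
  obtain ⟨-, k, hkJ', hkeq⟩ := habove (plat j) hbplatj (Or.inl ⟨j, by omega, rfl⟩)
  have hkJ'lt : k < J' := by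
    rcases eq_or_lt_of_le hkJ' with h | h
    · exfalso
      rw [h, hplatJ'] at hkeq
      linarith
    · exact h
  -- the next platform of the second terrace lies strictly below b
  have hk1b : plat' (k+1) < b := by
    have h1 : plat' (k+1) < plat j := by
      rw [← hkeq]
      exact hdec' k hkJ'lt
    rcases lt_trichotomy (plat' (k+1)) b with h | h | h
    · exact h
    · exact absurd h (hbP' (k+1) (by omega))
    · exfalso
      obtain ⟨⟨m, hm, hmeq⟩, -⟩ := habove (plat' (k+1)) h (Or.inr ⟨k+1, by omega, rfl⟩)
      -- plat m ∈ (plat (j+1), plat j) is impossible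
      have h2 : plat m < plat j := by rw [hmeq]; exact h1
      have h3 : plat (j+1) < plat m := by rw [hmeq, hjb]; exact h
      have hmj : j < m := by
        by_contra hle
        push_neg at hle
        exact absurd (plat_anti hdec m j hle (by omega)) (not_le.2 h2)
      have hmj1 : m < j + 1 := by
        by_contra hle
        push_neg at hle
        exact absurd (plat_anti hdec (j+1) m hle hm) (not_le.2 h3)
      omega
  -- speed comparison at the top
  have htd'k : TD f S (c' k) (plat j) (plat' (k+1)) ((packs' k hkJ'lt).q) := by
    rw [← hkeq]
    exact (packs' k hkJ'lt).td
  have hck : c' k < c j := by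
    apply deeper_slower hS (packs j (by omega)).td htd'k
    · rw [hjb]; exact hk1b
    · exact (jumps _ (hstb j (by omega))).1
  -- chain induction
  set r := (packs' k hkJ'lt).q with hrdef
  have hstep : ∀ m, (j + 1 ≤ m ∧ m < J ∧ plat' (k+1) < plat m) →
      (j + 1 ≤ m + 1 ∧ m + 1 < J ∧ plat' (k+1) < plat (m+1)) := by
    intro m ⟨hm1, hm2, hm3⟩
    have hcm' : c j ≤ c m := c_mono hcm j m (by omega) hm2
    have hplatm_le_b : plat m ≤ b := by
      rw [← hjb]
      exact plat_anti hdec (j+1) m hm1 hm2.le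
    have hplatm_lt : plat m < plat j := lt_of_le_of_lt hplatm_le_b hbplatj
    rcases lt_trichotomy (plat (m+1)) (plat' (k+1)) with hlt | heq | hgt
    · -- squeeze contradiction
      exfalso
      set l := plat' (k+1) with hldef
      set u := plat m with hudef
      have hlu : l < u := hm3
      have packm := packs m hm2
      set q2 := packm.q with hq2def
      have hrcont : ContinuousOn r (Icc l u) := by
        apply htd'k.cont.mono
        exact Icc_subset_Icc le_rfl hplatm_lt.le
      have hq2cont : ContinuousOn q2 (Icc l u) := by
        apply packm.td.cont.mono
        exact Icc_subset_Icc hlt.le le_rfl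
      have hneg : ∀ p ∈ Ioo l u, r p < 0 ∧ q2 p < 0 := by
        intro p hp
        constructor
        · exact htd'k.neg p ⟨hp.1, lt_trans hp.2 hplatm_lt⟩
        · exact packm.td.neg p ⟨lt_trans hlt hp.1, hp.2⟩
      have hoder : ∀ p ∈ Ioo l u, p ∉ S → HasDerivAt r (-(c' k) - f p / r p) p :=
        fun p hp hpS => htd'k.ode p ⟨hp.1, lt_trans hp.2 hplatm_lt⟩ hpS
      have hodeq2 : ∀ p ∈ Ioo l u, p ∉ S → HasDerivAt q2 (-(c m) - f p / q2 p) p :=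
        fun p hp hpS => packm.td.ode p ⟨lt_trans hlt hp.1, hp.2⟩ hpS
      have hcc : c' k < c m := lt_of_lt_of_le hck hcm'
      -- anchor near u
      have hq2u : q2 u = 0 := packm.td.top
      have hru : r u < 0 := htd'k.neg u ⟨hm3, hplatm_lt⟩
      set D := fun p => r p ^ 2 - q2 p ^ 2 with hDdef
      have hDu : 0 < D u := by
        simp only [hDdef, hq2u]
        nlinarith [hru]
      have hDcont : ContinuousWithinAt D (Icc l u) u :=
        ((hrcont.pow 2).sub (hq2cont.pow 2)) u (right_mem_Icc.2 hlu.le)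
      have hev : {p | 0 < D p} ∈ 𝓝[Icc l u] u := hDcont.tendsto (Ioi_mem_nhds hDu)
      rw [mem_nhdsWithin] at hev
      obtain ⟨t, ht_open, htu, ht⟩ := hev
      obtain ⟨δε, hδεpos, hδεball⟩ := Metric.isOpen_iff.1 ht_open u htu
      set p₀ := max ((l + u) / 2) (u - δε / 2) with hp₀def
      have hp₀mem : p₀ ∈ Ioo l u := by
        constructor
        · calc l < (l + u) / 2 := by linarith
            _ ≤ p₀ := le_max_left _ _
        · apply max_lt <;> linarith
      have hanc : ∀ p ∈ Ico p₀ u, q2 p ^ 2 < r p ^ 2 := by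
        intro p hp
        have hball : p ∈ Metric.ball u δε := by
          rw [Metric.mem_ball, Real.dist_eq, abs_lt]
          constructor
          · have : u - δε / 2 ≤ p₀ := le_max_right _ _
            have := hp.1
            linarith
          · linarith [hp.2]
        have hIcc : p ∈ Icc l u := ⟨le_trans hp₀mem.1.le hp.1, hp.2.le⟩
        have := ht ⟨hδεball hball, hIcc⟩
        simp only [mem_setOf_eq, hDdef] at this
        linarith
      have hprop := prop_down hS hlu hp₀mem hrcont hq2cont hneg hoder hodeq2 hcc hanc
      -- squeeze at l
      have hrl : r l = 0 := htd'k.bot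
      have hq2l : q2 l < 0 := packm.td.neg l ⟨hlt, hlu⟩
      have hne : (𝓝[Ioo l u] l).NeBot := nhds_right_neBot hlu
      have ht1 : Tendsto r (𝓝[Ioo l u] l) (𝓝 0) := by
        have := (hrcont l (left_mem_Icc.2 hlu.le)).tendsto
        rw [hrl] at this
        exact this.mono_left (nhdsWithin_mono _ Ioo_subset_Icc_self)
      have ht2 : Tendsto q2 (𝓝[Ioo l u] l) (𝓝 (q2 l)) := by
        have := (hq2cont l (left_mem_Icc.2 hlu.le)).tendsto
        exact this.mono_left (nhdsWithin_mono _ Ioo_subset_Icc_self)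
      have hevle : r ≤ᶠ[𝓝[Ioo l u] l] q2 := by
        filter_upwards [self_mem_nhdsWithin] with x hx
        exact (neg_lt_neg_of_sq (hneg x hx).1 (hneg x hx).2 (hprop x hx)).le
      have := le_of_tendsto_of_tendsto ht1 ht2 hevle
      linarith
    · -- common bottom : Lemma B contradiction
      exfalso
      have packm := packs m hm2
      have htdm : TD f S (c m) (plat m) (plat' (k+1)) (packm.q) := by
        rw [← heq]
        exact packm.td
      have hfast : c m < c' k := by
        apply higher_faster hS htdm htd'k hplatm_lt
        exact (jumps _ (hstb' (k+1) (by omega))).2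
      linarith
    · -- continue the chain
      refine ⟨by omega, ?_, hgt⟩
      rcases eq_or_lt_of_le (show m + 1 ≤ J by omega) with h | h
      · exfalso
        rw [h, hplatJ] at hgt
        have := plat_nonneg hdec' hplatJ' (k+1) (by omega)
        linarith
      · exact h
  have hGall : ∀ n, j + 1 + n ≤ J → (j + 1 ≤ j + 1 + n ∧ j + 1 + n < J ∧
      plat' (k+1) < plat (j + 1 + n)) := by
    intro n
    induction n with
    | zero =>
      intro _
      refine ⟨le_rfl, hj1J, ?_⟩
      rw [hjb]
      exact hk1b
    | succ nn ih =>
      intro hle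
      have hprev := ih (by omega)
      have := hstep (j + 1 + nn) hprev
      constructor
      · omega
      constructor
      · have := this.2.1
        omega
      · have h2 := this.2.2
        have h3 : j + 1 + (nn + 1) = j + 1 + nn + 1 := by omega
        rw [h3]
        exact h2
  -- take the chain to the end
  have hcontr := hGall (J - (j + 1)) (by omega)
  omega

end

end S16

/-- uniqueness of the propagating terrace connecting 1 and 0: same number
of fronts, same platforms, same speeds, and same profiles up to shifts. -/
theorem stmt16 (f : ℝ → ℝ) (I : ℕ) (θ : ℕ → ℝ)
    (hH1 : H1 f I θ) (hH2 : H2 f I θ) (hH3 : H3 f I θ)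
    (J J' : ℕ) (φ φ' : ℕ → ℝ → ℝ) (c c' : ℕ → ℝ) (plat plat' : ℕ → ℝ)
    (hT : IsTerrace f I θ J φ c plat) (hT' : IsTerrace f I θ J' φ' c' plat') :
    J = J' ∧ (∀ j ≤ J, plat j = plat' j) ∧
    ∀ j < J, c j = c' j ∧ ∃ Z : ℝ, ∀ z : ℝ, φ j z = φ' j (z + Z) := by
  classical
  obtain ⟨hJpos, hplat0, hplatJ, hdec, hstb, hcm, hfr⟩ := hT
  obtain ⟨hJ'pos, hplat0', hplatJ', hdec', hstb', hcm', hfr'⟩ := hT'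
  set S := StablePts I θ with hSdef
  have hSfin : S.Finite := S16.stable_finite I θ
  have jumps : ∀ s ∈ S, S16.JumpTop f S s ∧ S16.JumpBot f S s :=
    fun s hs => S16.stable_jumps hH3 hs
  have packs : ∀ j, j < J → S16.FrontPack f S (c j) (plat j) (plat (j+1)) (φ j) := by
    intro j hj
    obtain ⟨hTW, hCM, hOC⟩ := hfr j hj
    obtain ⟨hTW1, hTW2⟩ := hTW
    obtain ⟨hanti, hltb, hrtb⟩ := hCM
    exact (S16.buildFront hTW1 hTW2 hanti hltb hrtb hOC (hdec j hj)
      (jumps _ (hstb j hj.le)).1 (jumps _ (hstb (j+1) hj)).2).some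
  have packs' : ∀ k, k < J' → S16.FrontPack f S (c' k) (plat' k) (plat' (k+1)) (φ' k) := by
    intro k hk
    obtain ⟨hTW, hCM, hOC⟩ := hfr' k hk
    obtain ⟨hTW1, hTW2⟩ := hTW
    obtain ⟨hanti, hltb, hrtb⟩ := hCM
    exact (S16.buildFront hTW1 hTW2 hanti hltb hrtb hOC (hdec' k hk)
      (jumps _ (hstb' k hk.le)).1 (jumps _ (hstb' (k+1) hk)).2).some
  set PF : Finset ℝ := (Finset.range (J+1)).image plat with hPF
  set PF' : Finset ℝ := (Finset.range (J'+1)).image plat' with hPF'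
  have hPFmem : ∀ x : ℝ, x ∈ PF ↔ ∃ i ≤ J, plat i = x := by
    intro x
    simp [hPF, Finset.mem_image, Finset.mem_range, Nat.lt_succ_iff]
  have hPF'mem : ∀ x : ℝ, x ∈ PF' ↔ ∃ i ≤ J', plat' i = x := by
    intro x
    simp [hPF', Finset.mem_image, Finset.mem_range, Nat.lt_succ_iff]
  have hPFeq : PF = PF' := by
    by_contra hne
    set D := (PF \ PF') ∪ (PF' \ PF) with hD
    have hDne : D.Nonempty := by
      by_contra hDe
      rw [Finset.not_nonempty_iff_eq_empty] at hDe
      apply hne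
      apply Finset.ext
      intro x
      constructor
      · intro hx
        by_contra hx'
        have hmem : x ∈ D := Finset.mem_union_left _ (Finset.mem_sdiff.2 ⟨hx, hx'⟩)
        rw [hDe] at hmem
        exact absurd hmem (Finset.notMem_empty x)
      · intro hx
        by_contra hx'
        have hmem : x ∈ D := Finset.mem_union_right _ (Finset.mem_sdiff.2 ⟨hx, hx'⟩)
        rw [hDe] at hmem
        exact absurd hmem (Finset.notMem_empty x)
    set b := D.max' hDne with hb
    have hbD := D.max'_mem hDne
    have habove : ∀ x : ℝ, b < x → ((∃ i ≤ J, plat i = x) ∨ (∃ i ≤ J', plat' i = x)) →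
        ((∃ i ≤ J, plat i = x) ∧ (∃ i ≤ J', plat' i = x)) := by
      intro x hbx hx
      have hxD : x ∉ D := fun hxD => absurd (D.le_max' x hxD) (not_le.2 hbx)
      rcases hx with h | h
      · have hxPF : x ∈ PF := (hPFmem x).2 h
        have hxPF' : x ∈ PF' := by
          by_contra h'
          exact hxD (Finset.mem_union_left _ (Finset.mem_sdiff.2 ⟨hxPF, h'⟩))
        exact ⟨h, (hPF'mem x).1 hxPF'⟩
      · have hxPF' : x ∈ PF' := (hPF'mem x).2 h
        have hxPF : x ∈ PF := by
          by_contra h'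
          exact hxD (Finset.mem_union_right _ (Finset.mem_sdiff.2 ⟨hxPF', h'⟩))
        exact ⟨(hPFmem x).1 hxPF, h⟩
    rcases Finset.mem_union.1 hbD with hcase | hcase
    · rw [Finset.mem_sdiff] at hcase
      obtain ⟨hbPF, hbPF'⟩ := hcase
      obtain ⟨i, hi, hieq⟩ := (hPFmem b).1 hbPF
      have hine : i ≠ 0 := by
        intro h0
        apply hbPF'
        apply (hPF'mem b).2
        exact ⟨0, Nat.zero_le _, by rw [hplat0', ← hplat0, ← h0, hieq]⟩
      apply S16.core hSfin jumps hplat0 hplatJ hdec hstb hcm packs hplatJ' hdec' hstb' packs'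
        (b := b)
      · exact ⟨i - 1, by omega, by rw [(by omega : i - 1 + 1 = i)]; exact hieq⟩
      · intro k hk heq
        exact hbPF' ((hPF'mem b).2 ⟨k, hk, heq⟩)
      · exact habove
    · rw [Finset.mem_sdiff] at hcase
      obtain ⟨hbPF', hbPF⟩ := hcase
      obtain ⟨i, hi, hieq⟩ := (hPF'mem b).1 hbPF'
      have hine : i ≠ 0 := by
        intro h0
        apply hbPF
        apply (hPFmem b).2
        exact ⟨0, Nat.zero_le _, by rw [hplat0, ← hplat0', ← h0, hieq]⟩
      apply S16.core hSfin jumps hplat0' hplatJ' hdec' hstb' hcm' packs' hplatJ hdec hstb packs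
        (b := b)
      · exact ⟨i - 1, by omega, by rw [(by omega : i - 1 + 1 = i)]; exact hieq⟩
      · intro k hk heq
        exact hbPF ((hPFmem b).2 ⟨k, hk, heq⟩)
      · intro x hbx hx
        have hx' : (∃ i ≤ J, plat i = x) ∨ (∃ i ≤ J', plat' i = x) := hx.symm
        obtain ⟨ha, hb'⟩ := habove x hbx hx'
        exact ⟨hb', ha⟩
  have hPP' : ∀ x : ℝ, (∃ i ≤ J, plat i = x) ↔ (∃ i ≤ J', plat' i = x) := by
    intro x
    rw [← hPFmem, ← hPF'mem, hPFeq]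
  have hpt : ∀ n, n ≤ J → n ≤ J' → plat n = plat' n := by
    intro n
    induction n with
    | zero =>
      intro _ _
      rw [hplat0, hplat0']
    | succ nn ih =>
      intro h1 h2
      have ihe : plat nn = plat' nn := ih (by omega) (by omega)
      have hle1 : plat (nn+1) ≤ plat' (nn+1) := by
        obtain ⟨k, hk, hkeq⟩ := (hPP' (plat (nn+1))).1 ⟨nn+1, h1, rfl⟩
        have hlt : plat' k < plat' nn := by
          rw [hkeq, ← ihe]
          exact S16.plat_strictAnti hdec nn (nn+1) (by omega) h1
        have hnk : nn < k := by
          by_contra hle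
          push_neg at hle
          exact absurd (S16.plat_anti hdec' k nn hle (by omega)) (not_le.2 hlt)
        rw [← hkeq]
        exact S16.plat_anti hdec' (nn+1) k (by omega) hk
      have hle2 : plat' (nn+1) ≤ plat (nn+1) := by
        obtain ⟨k, hk, hkeq⟩ := (hPP' (plat' (nn+1))).2 ⟨nn+1, h2, rfl⟩
        have hlt : plat k < plat nn := by
          rw [hkeq, ihe]
          exact S16.plat_strictAnti hdec' nn (nn+1) (by omega) h2
        have hnk : nn < k := by
          by_contra hle
          push_neg at hle
          exact absurd (S16.plat_anti hdec k nn hle (by omega)) (not_le.2 hlt)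
        rw [← hkeq]
        exact S16.plat_anti hdec (nn+1) k (by omega) hk
      linarith
  have hJJ' : J = J' := by
    by_contra hne
    rcases Nat.lt_or_ge J J' with h | h
    · have h0 : plat' J = plat J := (hpt J le_rfl h.le).symm
      rw [hplatJ] at h0
      have hq := S16.plat_strictAnti hdec' J J' h le_rfl
      rw [hplatJ', h0] at hq
      exact lt_irrefl 0 hq
    · have hJ'J : J' < J := by omega
      have h0 : plat J' = plat' J' := hpt J' hJ'J.le le_rfl
      rw [hplatJ'] at h0
      have hq := S16.plat_strictAnti hdec J' J hJ'J le_rfl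
      rw [hplatJ, h0] at hq
      exact lt_irrefl 0 hq
  refine ⟨hJJ', fun j hj => hpt j hj (by omega), ?_⟩
  intro j hj
  have hj' : j < J' := by omega
  have hp1 : plat' j = plat j := (hpt j hj.le (by omega)).symm
  have hp2 : plat' (j+1) = plat (j+1) := (hpt (j+1) hj (by omega)).symm
  have packj := packs j hj
  have pack'j := packs' j hj'
  have htd'j : S16.TD f S (c' j) (plat j) (plat (j+1)) (pack'j.q) := by
    rw [← hp1, ← hp2]
    exact pack'j.td
  have hse := S16.same_ends hSfin packj.td htd'j
    (jumps _ (hstb j hj.le)).1 (jumps _ (hstb (j+1) hj)).2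
  exact ⟨hse.1, S16.shift_of_eq_traj packj pack'j hp1 hp2 hse.2⟩
end

section
/- Let φ₁ and φ₂ be monotone traveling waves with phase-plane trajectories q₁ on (a₁,b₁) and q₂ on (a₂,b₂), with speeds c₁ ≥ c₂, where a₂ < b₁ < b₂ and q₁(b₁) = 0 > q₂(b₁). Then a₁ ≥ a₂ and q₁(p) > q₂(p) for all p ∈ (a₁, b₁). -/
open Set Filter Topology

lemma antitone_aux {E : Set ℝ} (hE : E.Finite) :
    ∀ (g : ℝ → ℝ) (a b : ℝ), a ≤ b → ContinuousOn g (Icc a b) →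
      (∀ x ∈ Ioo a b, x ∉ E → ∃ d, HasDerivAt g d x ∧ d ≤ 0) → g b ≤ g a := by
  refine Set.Finite.induction_on (motive := fun E _ => ∀ (g : ℝ → ℝ) (a b : ℝ), a ≤ b →
      ContinuousOn g (Icc a b) →
      (∀ x ∈ Ioo a b, x ∉ E → ∃ d, HasDerivAt g d x ∧ d ≤ 0) → g b ≤ g a) E hE ?_ ?_
  · intro g a b hab hc hd
    have hA : AntitoneOn g (Icc a b) := by
      refine antitoneOn_of_hasDerivWithinAt_nonpos (f' := deriv g) (convex_Icc a b) hc ?_ ?_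
      · intro x hx
        rw [interior_Icc] at hx
        obtain ⟨d, hd', hd0⟩ := hd x hx (notMem_empty x)
        rw [hd'.deriv]; exact hd'.hasDerivWithinAt
      · intro x hx
        rw [interior_Icc] at hx
        obtain ⟨d, hd', hd0⟩ := hd x hx (notMem_empty x)
        rw [hd'.deriv]; exact hd0
    exact hA (left_mem_Icc.2 hab) (right_mem_Icc.2 hab) hab
  · intro c s hcs hsf IH g a b hab hc hd
    by_cases hcab : c ∈ Ioo a b
    · have h1 : g c ≤ g a := by
        refine IH g a c hcab.1.le (hc.mono (Icc_subset_Icc le_rfl hcab.2.le)) ?_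
        intro x hx hxs
        refine hd x ⟨hx.1, hx.2.trans hcab.2⟩ ?_
        simp only [mem_insert_iff, not_or]
        exact ⟨hx.2.ne, hxs⟩
      have h2 : g b ≤ g c := by
        refine IH g c b hcab.2.le (hc.mono (Icc_subset_Icc hcab.1.le le_rfl)) ?_
        intro x hx hxs
        refine hd x ⟨hcab.1.trans hx.1, hx.2⟩ ?_
        simp only [mem_insert_iff, not_or]
        exact ⟨hx.1.ne', hxs⟩
      exact h2.trans h1
    · refine IH g a b hab hc ?_
      intro x hx hxs
      refine hd x hx ?_
      simp only [mem_insert_iff, not_or]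
      exact ⟨fun h => hcab (h ▸ hx), hxs⟩

/-- ordering lemma for trajectories of two fronts whose ranges overlap. -/
theorem stmt17 (f q₁ q₂ : ℝ → ℝ) (a₁ b₁ a₂ b₂ c₁ c₂ M : ℝ)
    (E : Set ℝ) (hE : E.Finite)
    (hab₁ : a₁ < b₁) (hab₂ : a₂ < b₂)
    (hfM : ∀ p ∈ Icc (min a₁ a₂) (max b₁ b₂), |f p| ≤ M)
    (hq₁c : ContinuousOn q₁ (Icc a₁ b₁)) (hq₂c : ContinuousOn q₂ (Icc a₂ b₂))
    (hq₁neg : ∀ p ∈ Ioo a₁ b₁, q₁ p < 0) (hq₂neg : ∀ p ∈ Ioo a₂ b₂, q₂ p < 0)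
    (hq₁ode : ∀ p ∈ Ioo a₁ b₁, p ∉ E → HasDerivAt q₁ (-c₁ - f p / q₁ p) p)
    (hq₂ode : ∀ p ∈ Ioo a₂ b₂, p ∉ E → HasDerivAt q₂ (-c₂ - f p / q₂ p) p)
    (hq₁a : q₁ a₁ = 0) (hq₁b : q₁ b₁ = 0) (hq₂a : q₂ a₂ = 0) (hq₂b : q₂ b₂ = 0)
    (hc : c₂ ≤ c₁) (hb₁l : a₂ < b₁) (hb₁r : b₁ < b₂) (hq₂b₁ : q₂ b₁ < 0) :
    a₂ ≤ a₁ ∧ ∀ p ∈ Ioo a₁ b₁, q₂ p < q₁ p := by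
  have hM0 : 0 ≤ M :=
    (abs_nonneg (f b₁)).trans (hfM b₁ ⟨(min_le_left a₁ a₂).trans hab₁.le, le_max_left _ _⟩)
  set w : ℝ → ℝ := fun p => q₁ p - q₂ p with hw
  -- main comparison lemma
  have main : ∀ p₁, max a₁ a₂ < p₁ → p₁ < b₁ → q₂ p₁ < q₁ p₁ := by
    intro p₁ hp₁l hp₁r
    by_contra hcon
    push_neg at hcon
    have hp₁a₁ : a₁ < p₁ := (le_max_left a₁ a₂).trans_lt hp₁l
    have hp₁a₂ : a₂ < p₁ := (le_max_right a₁ a₂).trans_lt hp₁l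
    have hsub1 : Icc p₁ b₁ ⊆ Icc a₁ b₁ := Icc_subset_Icc hp₁a₁.le le_rfl
    have hsub2 : Icc p₁ b₁ ⊆ Icc a₂ b₂ := Icc_subset_Icc hp₁a₂.le hb₁r.le
    have hwc : ContinuousOn w (Icc p₁ b₁) := (hq₁c.mono hsub1).sub (hq₂c.mono hsub2)
    set S : Set ℝ := Icc p₁ b₁ ∩ w ⁻¹' (Iic 0) with hS
    have hSclosed : IsClosed S := hwc.preimage_isClosed_of_isClosed isClosed_Icc isClosed_Iic
    have hScompact : IsCompact S := isCompact_Icc.of_isClosed_subset hSclosed inter_subset_left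
    have hSne : S.Nonempty := ⟨p₁, ⟨le_rfl, hp₁r.le⟩, by simp [hw]; linarith⟩
    set p₀ : ℝ := sSup S with hp₀
    have hp₀S : p₀ ∈ S := hScompact.sSup_mem hSne
    have hp₀mem : p₀ ∈ Icc p₁ b₁ := hp₀S.1
    have hw₀ : w p₀ ≤ 0 := hp₀S.2
    have hwb₁ : 0 < w b₁ := by
      have : w b₁ = q₁ b₁ - q₂ b₁ := rfl
      rw [this, hq₁b]; linarith
    have hp₀b₁ : p₀ < b₁ := lt_of_le_of_ne hp₀mem.2 (fun he => by
      rw [he] at hw₀; linarith)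
    have hwpos : ∀ p, p₀ < p → p ≤ b₁ → 0 < w p := by
      intro p hl hr
      by_contra hh
      push_neg at hh
      have hpS : p ∈ S := ⟨⟨hp₀mem.1.trans hl.le, hr⟩, hh⟩
      exact absurd (le_csSup hScompact.bddAbove hpS) (not_le.2 hl)
    set b' : ℝ := (p₀ + b₁) / 2 with hb'
    have hb'l : p₀ < b' := by rw [hb']; linarith
    have hb'r : b' < b₁ := by rw [hb']; linarith
    -- bounds on q₁, q₂ on [p₀, b']
    have hKsub1 : Icc p₀ b' ⊆ Icc a₁ b₁ :=
      Icc_subset_Icc (hp₁a₁.le.trans hp₀mem.1) hb'r.le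
    have hKsub2 : Icc p₀ b' ⊆ Icc a₂ b₂ :=
      Icc_subset_Icc (hp₁a₂.le.trans hp₀mem.1) (hb'r.le.trans hb₁r.le)
    have hKoo1 : Icc p₀ b' ⊆ Ioo a₁ b₁ := fun x hx =>
      ⟨hp₁a₁.trans_le (hp₀mem.1.trans hx.1), hx.2.trans_lt hb'r⟩
    have hKoo2 : Icc p₀ b' ⊆ Ioo a₂ b₂ := fun x hx =>
      ⟨hp₁a₂.trans_le (hp₀mem.1.trans hx.1), (hx.2.trans_lt hb'r).trans hb₁r⟩
    obtain ⟨x₁, hx₁K, hx₁max⟩ := isCompact_Icc.exists_isMaxOn (nonempty_Icc.2 hb'l.le)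
      (hq₁c.mono hKsub1)
    obtain ⟨x₂, hx₂K, hx₂max⟩ := isCompact_Icc.exists_isMaxOn (nonempty_Icc.2 hb'l.le)
      (hq₂c.mono hKsub2)
    have hδ₁ : q₁ x₁ < 0 := hq₁neg x₁ (hKoo1 hx₁K)
    have hδ₂ : q₂ x₂ < 0 := hq₂neg x₂ (hKoo2 hx₂K)
    have hP₀ : 0 < q₁ x₁ * q₂ x₂ := mul_pos_of_neg_of_neg hδ₁ hδ₂
    set L : ℝ := M / (q₁ x₁ * q₂ x₂) with hL
    have hL0 : 0 ≤ L := div_nonneg hM0 hP₀.le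
    set g : ℝ → ℝ := fun p => w p * Real.exp (-L * p) with hg
    have hgc : ContinuousOn g (Icc p₀ b') := by
      refine ((hwc.mono (Icc_subset_Icc hp₀mem.1 hb'r.le)).mul ?_)
      exact (Real.continuous_exp.comp (continuous_const.mul continuous_id)).continuousOn
    have key : g b' ≤ g p₀ := by
      refine antitone_aux hE g p₀ b' hb'l.le hgc ?_
      intro x hx hxE
      have hxK : x ∈ Icc p₀ b' := ⟨hx.1.le, hx.2.le⟩
      have hq₁x : q₁ x < 0 := hq₁neg x (hKoo1 hxK)
      have hq₂x : q₂ x < 0 := hq₂neg x (hKoo2 hxK)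
      have hwx : 0 < w x := hwpos x hx.1 (hx.2.le.trans hb'r.le)
      have hd1 := hq₁ode x (hKoo1 hxK) hxE
      have hd2 := hq₂ode x (hKoo2 hxK) hxE
      have hde : HasDerivAt (fun p => Real.exp (-L * p)) (Real.exp (-L * x) * -L) x := by
        simpa using ((hasDerivAt_id x).const_mul (-L)).exp
      have hdg : HasDerivAt g
          (((-c₁ - f x / q₁ x) - (-c₂ - f x / q₂ x)) * Real.exp (-L * x)
            + w x * (Real.exp (-L * x) * -L)) x := (hd1.sub hd2).mul hde
      refine ⟨_, hdg, ?_⟩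
      -- show the derivative is ≤ 0
      have hbound : |f x| ≤ M := by
        refine hfM x ⟨(min_le_left a₁ a₂).trans (hKoo1 hxK).1.le,
          (hKoo1 hxK).2.le.trans (le_max_left b₁ b₂)⟩
      have hq1le : q₁ x ≤ q₁ x₁ := hx₁max hxK
      have hq2le : q₂ x ≤ q₂ x₂ := hx₂max hxK
      have hPle : q₁ x₁ * q₂ x₂ ≤ q₁ x * q₂ x := by nlinarith
      have hPx : 0 < q₁ x * q₂ x := mul_pos_of_neg_of_neg hq₁x hq₂x
      have hA : f x / q₂ x - f x / q₁ x = f x * w x / (q₁ x * q₂ x) := by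
        have hwxe : w x = q₁ x - q₂ x := rfl
        rw [hwxe, div_sub_div _ _ hq₂x.ne hq₁x.ne, mul_comm (q₂ x) (q₁ x)]
        congr 1; ring
      have h1 : f x * w x ≤ M * w x := by nlinarith [le_abs_self (f x)]
      have h2 : f x * w x / (q₁ x * q₂ x) ≤ M * w x / (q₁ x * q₂ x) := by
        rw [div_eq_mul_inv, div_eq_mul_inv]
        exact mul_le_mul_of_nonneg_right h1 (inv_nonneg.2 hPx.le)
      have h3 : M * w x / (q₁ x * q₂ x) ≤ M * w x / (q₁ x₁ * q₂ x₂) :=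
        div_le_div_of_nonneg_left (by positivity) hP₀ hPle
      have h4 : M * w x / (q₁ x₁ * q₂ x₂) = L * w x := by rw [hL]; ring
      have hAle : (-c₁ - f x / q₁ x) - (-c₂ - f x / q₂ x) ≤ L * w x := by
        have : (-c₁ - f x / q₁ x) - (-c₂ - f x / q₂ x)
            = (c₂ - c₁) + (f x / q₂ x - f x / q₁ x) := by ring
        rw [this, hA]
        linarith [h2.trans (h3.trans_eq h4)]
      have hexp : 0 < Real.exp (-L * x) := Real.exp_pos _
      have : ((-c₁ - f x / q₁ x) - (-c₂ - f x / q₂ x)) * Real.exp (-L * x)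
          + w x * (Real.exp (-L * x) * -L)
          = (((-c₁ - f x / q₁ x) - (-c₂ - f x / q₂ x)) - L * w x) * Real.exp (-L * x) := by
        ring
      rw [this]
      exact mul_nonpos_of_nonpos_of_nonneg (by linarith) hexp.le
    have hgp₀ : g p₀ ≤ 0 := mul_nonpos_of_nonpos_of_nonneg hw₀ (Real.exp_pos _).le
    have hgb' : 0 < g b' := mul_pos (hwpos b' hb'l hb'r.le) (Real.exp_pos _)
    linarith
  -- first conclusion
  have ha : a₂ ≤ a₁ := by
    by_contra hcon
    push_neg at hcon
    have hq₁a₂ : q₁ a₂ < 0 := hq₁neg a₂ ⟨hcon, hb₁l⟩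
    have hne : (𝓝[Ioo a₂ b₁] a₂).NeBot := by
      refine mem_closure_iff_nhdsWithin_neBot.mp ?_
      rw [closure_Ioo hb₁l.ne]
      exact left_mem_Icc.2 hb₁l.le
    have hlim1 : Tendsto q₁ (𝓝[Ioo a₂ b₁] a₂) (𝓝 (q₁ a₂)) :=
      (hq₁c a₂ ⟨hcon.le, hb₁l.le⟩).mono_left
        (nhdsWithin_mono _ (fun x hx => ⟨hcon.le.trans hx.1.le, hx.2.le⟩))
    have hlim2 : Tendsto q₂ (𝓝[Ioo a₂ b₁] a₂) (𝓝 (q₂ a₂)) :=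
      (hq₂c a₂ ⟨le_rfl, hab₂.le⟩).mono_left
        (nhdsWithin_mono _ (fun x hx => ⟨hx.1.le, hx.2.le.trans hb₁r.le⟩))
    have hle : q₂ a₂ ≤ q₁ a₂ := by
      refine le_of_tendsto_of_tendsto hlim2 hlim1 ?_
      filter_upwards [self_mem_nhdsWithin] with p hp
      exact (main p (max_lt (hcon.trans hp.1) hp.1) hp.2).le
    rw [hq₂a] at hle
    linarith
  refine ⟨ha, fun p hp => main p ?_ hp.2⟩
  rw [max_eq_left ha]
  exact hp.1
end
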